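/- arXiv:0803.0153 — 10 statements merged into one kernel-verified Lean document; each statement's English description precedes it below -/
import Mathlib

section
/- For all real rates λ, μ with 0 ≤ μ < λ and every integer n ≥ 1, the function q_or(t|n) := n λ^n (λ−μ)^2 (1−e^{−(λ−μ)t})^{n−1} e^{−(λ−μ)t} / (λ − μ e^{−(λ−μ)t})^{n+1} is nonnegative on (0,∞) and its integral over t from 0 to ∞ equals 1 (i.e., it is a probability density on (0,∞)). -/
/-!
Writing `u t = λ (1 - e^{-(λ-μ)t}) / (λ - μ e^{-(λ-μ)t})` (Kendall's `u_t`), the density is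
`d/dt (u t ^ n)`. Since `u 0 = 0` and `u t → 1` as `t → ∞`, the integral over `(0, ∞)` is `1`.
-/

open Real MeasureTheory Filter Topology

noncomputable section

def kendallU (la mu t : ℝ) : ℝ :=
  la * (1 - exp (-(la - mu) * t)) / (la - mu * exp (-(la - mu) * t))

def originDensity (la mu : ℝ) (n : ℕ) (t : ℝ) : ℝ :=
  n * la ^ n * (la - mu) ^ 2 * (1 - exp (-(la - mu) * t)) ^ (n - 1) *
    exp (-(la - mu) * t) / (la - mu * exp (-(la - mu) * t)) ^ (n + 1)

end

section

variable {la mu t : ℝ}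

lemma exp_neg_mul_le_one {r : ℝ} (hr : 0 ≤ r) (ht : 0 ≤ t) : exp (-r * t) ≤ 1 :=
  exp_le_one_iff.2 (by rw [neg_mul]; exact neg_nonpos.2 (mul_nonneg hr ht))

lemma kendallU_denom_pos (hmu : 0 ≤ mu) (hml : mu < la) (ht : 0 ≤ t) :
    0 < la - mu * exp (-(la - mu) * t) := by
  have := mul_le_of_le_one_right hmu (exp_neg_mul_le_one (sub_nonneg.2 hml.le) ht)
  linarith

@[simp]
lemma kendallU_zero : kendallU la mu 0 = 0 := by
  simp [kendallU]

lemma hasDerivAt_kendallU (h : la - mu * exp (-(la - mu) * t) ≠ 0) :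
    HasDerivAt (kendallU la mu)
      (la * (la - mu) ^ 2 * exp (-(la - mu) * t) / (la - mu * exp (-(la - mu) * t)) ^ 2) t := by
  have he : HasDerivAt (fun s ↦ exp (-(la - mu) * s)) (-(la - mu) * exp (-(la - mu) * t)) t := by
    simpa [mul_comm] using ((hasDerivAt_id t).const_mul (-(la - mu))).exp
  have hnum := (he.const_sub 1).const_mul la
  have hden := (he.const_mul mu).const_sub la
  exact (hnum.div hden h).congr_deriv (by ring)

lemma tendsto_kendallU_atTop (hml : mu < la) (hla : la ≠ 0) :
    Tendsto (kendallU la mu) atTop (𝓝 1) := by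
  have hexp : Tendsto (fun s ↦ exp (-(la - mu) * s)) atTop (𝓝 0) :=
    tendsto_exp_atBot.comp
      (tendsto_id.const_mul_atTop_of_neg (neg_neg_of_pos (sub_pos.2 hml)))
  have h : Tendsto (kendallU la mu) atTop (𝓝 (la * (1 - 0) / (la - mu * 0))) :=
    ((hexp.const_sub 1).const_mul la).div ((hexp.const_mul mu).const_sub la) (by simpa using hla)
  simpa [div_self hla] using h

lemma originDensity_nonneg (hmu : 0 ≤ mu) (hml : mu < la) (n : ℕ) (ht : 0 ≤ t) :
    0 ≤ originDensity la mu n t := by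
  have hla : 0 ≤ la := hmu.trans hml.le
  have h1 : 0 ≤ 1 - exp (-(la - mu) * t) :=
    sub_nonneg.2 (exp_neg_mul_le_one (sub_nonneg.2 hml.le) ht)
  unfold originDensity
  have := kendallU_denom_pos hmu hml ht
  positivity

lemma hasDerivAt_kendallU_pow (hmu : 0 ≤ mu) (hml : mu < la) {n : ℕ} (hn : n ≠ 0)
    (ht : 0 ≤ t) : HasDerivAt (fun s ↦ kendallU la mu s ^ n) (originDensity la mu n t) t := by
  have hden := kendallU_denom_pos hmu hml ht
  refine ((hasDerivAt_kendallU hden.ne').pow n).congr_deriv ?_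
  obtain ⟨m, rfl⟩ : ∃ m, n = m + 1 := ⟨n - 1, by omega⟩
  simp only [kendallU, originDensity, Nat.add_sub_cancel, div_pow, mul_pow]
  field_simp
  ring

end

theorem stmt_2 (la mu : ℝ) (hmu : 0 ≤ mu) (hml : mu < la) (n : ℕ) (hn : 1 ≤ n) :
    (∀ t ∈ Set.Ioi (0:ℝ),
        0 ≤ n * la ^ n * (la - mu) ^ 2 * (1 - exp (-(la - mu) * t)) ^ (n - 1) *
          exp (-(la - mu) * t) / (la - mu * exp (-(la - mu) * t)) ^ (n + 1)) ∧
      ∫ t in Set.Ioi (0:ℝ),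
        n * la ^ n * (la - mu) ^ 2 * (1 - exp (-(la - mu) * t)) ^ (n - 1) *
          exp (-(la - mu) * t) / (la - mu * exp (-(la - mu) * t)) ^ (n + 1) = 1 := by
  have hn0 : n ≠ 0 := Nat.one_le_iff_ne_zero.1 hn
  have hla : la ≠ 0 := (hmu.trans_lt hml).ne'
  have hnonneg : ∀ t ∈ Set.Ioi (0:ℝ), 0 ≤ originDensity la mu n t :=
    fun t ht ↦ originDensity_nonneg hmu hml n (le_of_lt ht)
  refine ⟨hnonneg, ?_⟩
  have hlim : Tendsto (fun s ↦ kendallU la mu s ^ n) atTop (𝓝 1) := by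
    simpa using (tendsto_kendallU_atTop hml hla).pow n
  exact (integral_Ioi_of_hasDerivAt_of_nonneg'
    (fun t ht ↦ hasDerivAt_kendallU_pow hmu hml hn0 ht) hnonneg hlim).trans (by simp [hn0])
end

section
/- For all real rates λ, μ with 0 ≤ μ < λ and every integer n ≥ 1, the function Q_or(t|n) := (λ(1−e^{−(λ−μ)t})/(λ − μ e^{−(λ−μ)t}))^n satisfies: (i) for every t > 0, its derivative at t equals q_or(t|n) := n λ^n (λ−μ)^2 (1−e^{−(λ−μ)t})^{n−1} e^{−(λ−μ)t} / (λ − μ e^{−(λ−μ)t})^{n+1}; and (ii) Q_or(t|n) tends to 1 as t → ∞. -/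
/-! Writing `E = exp (-(λ - μ) t)`, the base `λ (1 - E) / (λ - μ E)` is a Möbius transformation
of `E`, so the chain rule gives its derivative `λ (λ - μ)² E / (λ - μ E)²`, and the power rule then
gives `q_or`. The denominator `λ - μ E` stays above `λ - μ > 0` for `t ≥ 0`, and as `t → ∞`,
`E → 0` so the base tends to `λ / λ = 1`. -/

open Real Filter Topology

/-- `Q_or(t|1)`; the paper's `Q_or(t|n)` is its `n`-th power. -/
noncomputable def originCDF (la mu t : ℝ) : ℝ :=
  la * (1 - exp (-(la - mu) * t)) / (la - mu * exp (-(la - mu) * t))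

lemma hasDerivAt_mul_one_sub_div {la mu x : ℝ} (hx : la - mu * x ≠ 0) :
    HasDerivAt (fun x => la * (1 - x) / (la - mu * x))
      (-(la * (la - mu)) / (la - mu * x) ^ 2) x := by
  have hnum := ((hasDerivAt_id' x).const_sub 1).const_mul la
  have hden := ((hasDerivAt_id' x).const_mul mu).const_sub la
  refine (hnum.div hden hx).congr_deriv ?_
  ring

lemma hasDerivAt_exp_neg_mul (c t : ℝ) :
    HasDerivAt (fun t => exp (-c * t)) (-c * exp (-c * t)) t := by
  simpa [mul_comm] using ((hasDerivAt_id t).const_mul (-c)).exp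

lemma originCDF_denom_pos {la mu t : ℝ} (hmu : 0 ≤ mu) (hml : mu < la) (ht : 0 ≤ t) :
    0 < la - mu * exp (-(la - mu) * t) := by
  have hexp : exp (-(la - mu) * t) ≤ 1 := exp_le_one_iff.mpr (by nlinarith)
  nlinarith

lemma hasDerivAt_originCDF {la mu t : ℝ} (hmu : 0 ≤ mu) (hml : mu < la) (ht : 0 ≤ t) :
    HasDerivAt (originCDF la mu)
      (la * (la - mu) ^ 2 * exp (-(la - mu) * t) / (la - mu * exp (-(la - mu) * t)) ^ 2) t := by
  refine ((hasDerivAt_mul_one_sub_div (originCDF_denom_pos hmu hml ht).ne').comp t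
    (hasDerivAt_exp_neg_mul (la - mu) t)).congr_deriv ?_
  ring

lemma tendsto_originCDF_atTop {la mu : ℝ} (hla : la ≠ 0) (hml : mu < la) :
    Tendsto (originCDF la mu) atTop (𝓝 1) := by
  have hexp : Tendsto (fun t => exp (-(la - mu) * t)) atTop (𝓝 0) := by
    have := tendsto_exp_neg_atTop_nhds_zero.comp (tendsto_id.const_mul_atTop (sub_pos.mpr hml))
    simpa only [Function.comp_def, id, neg_mul] using this
  have hlim := ((hexp.const_sub 1).const_mul la).div ((hexp.const_mul mu).const_sub la)
    (by simpa using hla)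
  rwa [sub_zero, mul_one, mul_zero, sub_zero, div_self hla] at hlim

theorem stmt_3_general (la mu : ℝ) (hmu : 0 ≤ mu) (hml : mu < la) (n : ℕ) :
    (∀ t : ℝ, 0 < t →
        HasDerivAt
          (fun t : ℝ =>
            (la * (1 - exp (-(la - mu) * t)) / (la - mu * exp (-(la - mu) * t))) ^ n)
          (n * la ^ n * (la - mu) ^ 2 * (1 - exp (-(la - mu) * t)) ^ (n - 1) *
            exp (-(la - mu) * t) / (la - mu * exp (-(la - mu) * t)) ^ (n + 1))
          t) ∧
      Tendsto
        (fun t : ℝ =>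
          (la * (1 - exp (-(la - mu) * t)) / (la - mu * exp (-(la - mu) * t))) ^ n)
        atTop (nhds 1) := by
  constructor
  · intro t ht
    have hD := (originCDF_denom_pos hmu hml ht.le).ne'
    refine ((hasDerivAt_originCDF hmu hml ht.le).fun_pow n).congr_deriv ?_
    rcases n with _ | m
    · simp
    · simp only [originCDF, Nat.add_sub_cancel, div_pow, mul_pow]
      field_simp
      ring
  · have hlim := (tendsto_originCDF_atTop (by linarith) hml).pow n
    rwa [one_pow] at hlim

theorem stmt_3 (la mu : ℝ) (hmu : 0 ≤ mu) (hml : mu < la) (n : ℕ) (hn : 1 ≤ n) :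
    (∀ t : ℝ, 0 < t →
        HasDerivAt
          (fun t : ℝ =>
            (la * (1 - exp (-(la - mu) * t)) / (la - mu * exp (-(la - mu) * t))) ^ n)
          (n * la ^ n * (la - mu) ^ 2 * (1 - exp (-(la - mu) * t)) ^ (n - 1) *
            exp (-(la - mu) * t) / (la - mu * exp (-(la - mu) * t)) ^ (n + 1))
          t) ∧
      Tendsto
        (fun t : ℝ =>
          (la * (1 - exp (-(la - mu) * t)) / (la - mu * exp (-(la - mu) * t))) ^ n)
        atTop (nhds 1) :=
  stmt_3_general la mu hmu hml n
end

section
/- For all real rates λ, μ with 0 ≤ μ < λ, integers n ≥ 2 and 1 ≤ k ≤ n−1, and every s > 0, the integral over t from s to ∞ of f_{A_{n,t}^k}(s) · q_or(t|n), where f_{A_{n,t}^k}(s) := k·C(n−1,k)·(λ−μ)^{k+1}·(e^{−(λ−μ)s} − e^{−(λ−μ)t})^{k−1}·e^{−(λ−μ)s}·(λ − μ e^{−(λ−μ)t})^{n−k}·(1 − e^{−(λ−μ)s})^{n−k−1} / ((λ − μ e^{−(λ−μ)s})^n · (1 − e^{−(λ−μ)t})^{n−1}) and q_or(t|n) :=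 n λ^n (λ−μ)^2 (1−e^{−(λ−μ)t})^{n−1} e^{−(λ−μ)t} / (λ − μ e^{−(λ−μ)t})^{n+1}, equals (k+1)·C(n,k+1)·λ^{n−k}·(λ−μ)^{k+2}·e^{−(λ−μ)(k+1)s}·(1 − e^{−(λ−μ)s})^{n−k−1} / (λ − μ e^{−(λ−μ)s})^{n+1}. -/
open Real MeasureTheory Filter Topology Set

/-!
Write `r = λ - μ`, `a = e^{-rs}` and `u = e^{-rt}`. The factors `(1 - u)^{n-1}` cancel, and
the rest of the integrand is a constant multiple of the `t`-derivative of `g(t)^k` with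
`g(t) = (a - u) / (λ - μu)`, because `g'(t) = r u (λ - μa) / (λ - μu)^2`. Since `g(s) = 0` and
`g(t) → a / λ`, the integral is `n C(n-1,k) λ^n r^{k+2} a (1-a)^{n-k-1} / (λ - μa)^{n+1}
· (a / λ)^k`, and `n C(n-1,k) = (k+1) C(n,k+1)` gives the claimed density.
-/

theorem hasDerivAt_sub_exp_div_sub_exp (a la mu r : ℝ) {t : ℝ}
    (ht : la - mu * exp (-r * t) ≠ 0) :
    HasDerivAt (fun t => (a - exp (-r * t)) / (la - mu * exp (-r * t)))
      (r * exp (-r * t) * (la - mu * a) / (la - mu * exp (-r * t)) ^ 2) t := by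
  have hexp : HasDerivAt (fun t => exp (-r * t)) (-r * exp (-r * t)) t := by
    simpa [mul_comm] using ((hasDerivAt_id t).const_mul (-r)).exp
  exact ((hexp.const_sub a).div ((hexp.const_mul mu).const_sub la) ht).congr_deriv (by ring)

theorem tendsto_sub_exp_div_sub_exp_atTop (a la mu : ℝ) {r : ℝ} (hr : 0 < r) (hla : la ≠ 0) :
    Tendsto (fun t => (a - exp (-r * t)) / (la - mu * exp (-r * t))) atTop (𝓝 (a / la)) := by
  have hexp : Tendsto (fun t => exp (-r * t)) atTop (𝓝 0) :=
    tendsto_exp_comp_nhds_zero.mpr (tendsto_id.const_mul_atTop_of_neg (neg_neg_of_pos hr))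
  rw [show a / la = (a - 0) / (la - mu * 0) by simp]
  exact (tendsto_const_nhds.sub hexp).div (tendsto_const_nhds.sub (hexp.const_mul mu))
    (by simpa using hla)

theorem integrand_eq_mul_deriv_pow {la mu r a u : ℝ} {n k : ℕ} (hk : 1 ≤ k) (hkn : k + 1 ≤ n)
    (hu : 1 - u ≠ 0) (ha' : la - mu * a ≠ 0) (hu' : la - mu * u ≠ 0) :
    (k * (n - 1).choose k * r ^ (k + 1) * (a - u) ^ (k - 1) * a * (la - mu * u) ^ (n - k) *
        (1 - a) ^ (n - k - 1) / ((la - mu * a) ^ n * (1 - u) ^ (n - 1))) *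
      (n * la ^ n * r ^ 2 * (1 - u) ^ (n - 1) * u / (la - mu * u) ^ (n + 1)) =
    n * (n - 1).choose k * la ^ n * r ^ (k + 2) * a * (1 - a) ^ (n - k - 1) /
        (la - mu * a) ^ (n + 1) *
      (k * ((a - u) / (la - mu * u)) ^ (k - 1) * (r * u * (la - mu * a) / (la - mu * u) ^ 2)) := by
  obtain ⟨m, rfl⟩ : ∃ m, k = m + 1 := ⟨k - 1, by omega⟩
  obtain ⟨j, rfl⟩ : ∃ j, n = m + 2 + j := ⟨n - (m + 2), by omega⟩
  rw [show m + 2 + j - (m + 1) = j + 1 by omega, show j + 1 - 1 = j by omega,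
    show m + 2 + j - 1 = m + 1 + j by omega, Nat.add_sub_cancel, div_pow]
  -- the identity holds with these three factors as independent unknowns
  generalize la - mu * a = X at *
  generalize la - mu * u = Y at *
  generalize 1 - u = Z at *
  field_simp
  ring

theorem cast_mul_choose_pred {n : ℕ} (hn : 1 ≤ n) (k : ℕ) :
    (n : ℝ) * (n - 1).choose k = (k + 1) * n.choose (k + 1) := by
  obtain ⟨m, rfl⟩ : ∃ m, n = m + 1 := ⟨n - 1, by omega⟩
  rw [Nat.add_sub_cancel, mul_comm ((k : ℝ) + 1)]
  exact_mod_cast Nat.add_one_mul_choose_eq m k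

theorem choose_mul_div_pow_mul_div_pow {la mu r a : ℝ} {n k : ℕ} (hla : la ≠ 0) (hkn : k + 1 ≤ n) :
    n * (n - 1).choose k * la ^ n * r ^ (k + 2) * a * (1 - a) ^ (n - k - 1) /
        (la - mu * a) ^ (n + 1) * (a / la) ^ k =
      (k + 1) * n.choose (k + 1) * la ^ (n - k) * r ^ (k + 2) * a ^ (k + 1) *
        (1 - a) ^ (n - k - 1) / (la - mu * a) ^ (n + 1) := by
  rw [div_pow, pow_sub₀ la hla (by omega : k ≤ n), ← cast_mul_choose_pred (by omega)]
  field_simp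
  ring

theorem stmt_6_general (la mu : ℝ) (hmu : 0 ≤ mu) (hml : mu < la) (n k : ℕ)
    (hk1 : 1 ≤ k) (hk2 : k ≤ n - 1) (s : ℝ) (hs : 0 < s) :
    ∫ t in Set.Ioi s,
      (k * (n - 1).choose k * (la - mu) ^ (k + 1) *
          (exp (-(la - mu) * s) - exp (-(la - mu) * t)) ^ (k - 1) *
          exp (-(la - mu) * s) * (la - mu * exp (-(la - mu) * t)) ^ (n - k) *
          (1 - exp (-(la - mu) * s)) ^ (n - k - 1) /
          ((la - mu * exp (-(la - mu) * s)) ^ n * (1 - exp (-(la - mu) * t)) ^ (n - 1))) *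
        (n * la ^ n * (la - mu) ^ 2 * (1 - exp (-(la - mu) * t)) ^ (n - 1) *
          exp (-(la - mu) * t) / (la - mu * exp (-(la - mu) * t)) ^ (n + 1))
      = (k + 1) * n.choose (k + 1) * la ^ (n - k) * (la - mu) ^ (k + 2) *
          exp (-(la - mu) * ((k + 1) * s)) * (1 - exp (-(la - mu) * s)) ^ (n - k - 1) /
          (la - mu * exp (-(la - mu) * s)) ^ (n + 1) := by
  set r := la - mu
  have hr : 0 < r := sub_pos.mpr hml
  have hla : 0 < la := hmu.trans_lt hml
  have hden : ∀ u ≤ 1, 0 < la - mu * u := fun u hu => by nlinarith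
  have ha1 : exp (-r * s) < 1 := exp_lt_one_iff.mpr (by nlinarith)
  set a := exp (-r * s)
  have hda := hden a ha1.le
  have hexp_le : ∀ t ∈ Ici s, exp (-r * t) ≤ a := fun t ht =>
    exp_le_exp.mpr (by nlinarith [mem_Ici.mp ht])
  set g := fun t => (a - exp (-r * t)) / (la - mu * exp (-r * t))
  set C := n * (n - 1).choose k * la ^ n * r ^ (k + 2) * a * (1 - a) ^ (n - k - 1) /
    (la - mu * a) ^ (n + 1)
  calc _ = ∫ t in Ioi s, C * (k * g t ^ (k - 1) *
        (r * exp (-r * t) * (la - mu * a) / (la - mu * exp (-r * t)) ^ 2)) := by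
        refine setIntegral_congr_fun measurableSet_Ioi fun t ht => ?_
        have hta := hexp_le t (Ioi_subset_Ici_self ht)
        exact integrand_eq_mul_deriv_pow hk1 (by omega) (by linarith) hda.ne'
          (hden _ (by linarith)).ne'
    _ = C * (a / la) ^ k - C * g s ^ k := by
        refine integral_Ioi_of_hasDerivAt_of_nonneg' (fun t ht => ?_) (fun t ht => ?_)
          ((tendsto_sub_exp_div_sub_exp_atTop a la mu hr hla.ne').pow k |>.const_mul C)
        · have hta := hexp_le t ht
          exact ((hasDerivAt_sub_exp_div_sub_exp a la mu r (hden _ (by linarith)).ne').pow k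
            |>.const_mul C)
        · have hta := hexp_le t (Ioi_subset_Ici_self ht)
          have hg : 0 ≤ g t := div_nonneg (by linarith) (hden _ (by linarith)).le
          have : 0 ≤ 1 - a := by linarith
          positivity
    _ = _ := by
        have hgs : g s = 0 := by simp [g, a]
        have hexp_pow : exp (-r * ((k + 1) * s)) = a ^ (k + 1) := by
          rw [← exp_nat_mul]; push_cast; ring_nf
        rw [hgs, zero_pow (by omega), mul_zero, sub_zero, hexp_pow]
        exact choose_mul_div_pow_mul_div_pow hla.ne' (by omega)

theorem stmt_6 (la mu : ℝ) (hmu : 0 ≤ mu) (hml : mu < la) (n k : ℕ)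
    (hn : 2 ≤ n) (hk1 : 1 ≤ k) (hk2 : k ≤ n - 1) (s : ℝ) (hs : 0 < s) :
    ∫ t in Set.Ioi s,
      (k * (n - 1).choose k * (la - mu) ^ (k + 1) *
          (exp (-(la - mu) * s) - exp (-(la - mu) * t)) ^ (k - 1) *
          exp (-(la - mu) * s) * (la - mu * exp (-(la - mu) * t)) ^ (n - k) *
          (1 - exp (-(la - mu) * s)) ^ (n - k - 1) /
          ((la - mu * exp (-(la - mu) * s)) ^ n * (1 - exp (-(la - mu) * t)) ^ (n - 1))) *
        (n * la ^ n * (la - mu) ^ 2 * (1 - exp (-(la - mu) * t)) ^ (n - 1) *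
          exp (-(la - mu) * t) / (la - mu * exp (-(la - mu) * t)) ^ (n + 1))
      = (k + 1) * n.choose (k + 1) * la ^ (n - k) * (la - mu) ^ (k + 2) *
          exp (-(la - mu) * ((k + 1) * s)) * (1 - exp (-(la - mu) * s)) ^ (n - k - 1) /
          (la - mu * exp (-(la - mu) * s)) ^ (n + 1) :=
  stmt_6_general la mu hmu hml n k hk1 hk2 s hs
end

section
/- For all real rates λ, μ with 0 ≤ μ < λ, every integer k ≥ 1, and every s > 0, the integral over t from s to ∞ of (1 − e^{−(λ−μ)(t−s)})^{k−1} · e^{−(λ−μ)t} / (λ − μ e^{−(λ−μ)t})^{k+1} equals e^{−(λ−μ)s} / (k (λ−μ) (λ − μ e^{−(λ−μ)s}) λ^k). -/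
/-!
With `c = λ - μ`, the integrand is a constant multiple of the derivative of `g ^ k`, where
`g t = (1 - e^{-c(t-s)}) / (λ - μ e^{-ct})`: indeed `g' t = c (λ e^{cs} - μ) e^{-ct} / (λ - μ e^{-ct})²`.
Since `g s = 0` and `g t → λ⁻¹`, the integral is `λ^{-k} / (k c (λ e^{cs} - μ))`, and the integrand
is nonnegative, so the improper fundamental theorem of calculus applies without a separate
integrability argument.
-/

open Real MeasureTheory Filter Topology

noncomputable def expRatio (la mu c s t : ℝ) : ℝ :=
  (1 - exp (-c * (t - s))) / (la - mu * exp (-c * t))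

section
variable {la mu c s : ℝ}

@[simp]
lemma expRatio_self : expRatio la mu c s s = 0 := by
  simp [expRatio]

lemma hasDerivAt_expRatio {t : ℝ} (ht : la - mu * exp (-c * t) ≠ 0) :
    HasDerivAt (expRatio la mu c s)
      (c * (la * exp (c * s) - mu) * exp (-c * t) / (la - mu * exp (-c * t)) ^ 2) t := by
  have hnum : HasDerivAt (fun t => 1 - exp (-c * (t - s))) (c * exp (-c * (t - s))) t := by
    refine ((((hasDerivAt_id t).sub_const s).const_mul (-c)).exp.const_sub 1).congr_deriv ?_
    simp only [id]; ring
  have hden : HasDerivAt (fun t => la - mu * exp (-c * t)) (c * mu * exp (-c * t)) t := by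
    refine ((((hasDerivAt_id t).const_mul (-c)).exp.const_mul mu).const_sub la).congr_deriv ?_
    simp only [id]; ring
  refine (hnum.div hden ht).congr_deriv ?_
  have hexp : exp (-c * (t - s)) = exp (c * s) * exp (-c * t) := by
    rw [← exp_add]; ring_nf
  rw [hexp]; ring

lemma hasDerivAt_expRatio_pow {t : ℝ} (ht : la - mu * exp (-c * t) ≠ 0) (k : ℕ) :
    HasDerivAt (fun t => expRatio la mu c s t ^ (k + 1))
      ((k + 1) * c * (la * exp (c * s) - mu) *
        ((1 - exp (-c * (t - s))) ^ k * exp (-c * t) / (la - mu * exp (-c * t)) ^ (k + 2))) t := by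
  refine ((hasDerivAt_expRatio (s := s) ht).pow (k + 1)).congr_deriv ?_
  rw [expRatio, div_pow]
  push_cast
  field_simp
  ring

lemma tendsto_expRatio_atTop (hc : 0 < c) (hla : la ≠ 0) :
    Tendsto (expRatio la mu c s) atTop (𝓝 la⁻¹) := by
  have hexp : ∀ b : ℝ, Tendsto (fun t => exp (-c * t + b)) atTop (𝓝 0) := fun b =>
    tendsto_exp_atBot.comp <| tendsto_atBot_add_const_right _ b <|
      tendsto_id.const_mul_atTop_of_neg (neg_lt_zero.mpr hc)
  have hnum : Tendsto (fun t => 1 - exp (-c * (t - s))) atTop (𝓝 1) := by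
    simpa [mul_sub] using tendsto_const_nhds.sub (hexp (c * s))
  have hden : Tendsto (fun t => la - mu * exp (-c * t)) atTop (𝓝 la) := by
    simpa using tendsto_const_nhds.sub ((hexp 0).const_mul mu)
  rw [← one_div]
  exact hnum.div hden hla

end

lemma sub_mul_exp_neg_mul_pos {la mu c t : ℝ} (hmu : 0 ≤ mu) (hml : mu < la) (hc : 0 ≤ c)
    (ht : 0 ≤ t) : 0 < la - mu * exp (-c * t) := by
  have : exp (-c * t) ≤ 1 := exp_le_one_iff.mpr (by nlinarith)
  nlinarith

theorem integral_Ioi_pow_mul_exp_div_pow {la mu c s : ℝ} (hc : 0 < c) (hla : 0 < la)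
    (hD : ∀ t ∈ Set.Ici s, 0 < la - mu * exp (-c * t)) (k : ℕ) :
    ∫ t in Set.Ioi s,
      (1 - exp (-c * (t - s))) ^ k * exp (-c * t) / (la - mu * exp (-c * t)) ^ (k + 2)
      = exp (-c * s) / ((k + 1) * c * (la - mu * exp (-c * s)) * la ^ (k + 1)) := by
  have hDs := hD s Set.self_mem_Ici
  have hexp : exp (c * s) * exp (-c * s) = 1 := by rw [← exp_add]; simp
  have hK : 0 < (k + 1) * c * (la * exp (c * s) - mu) := by
    have hfactor : la * exp (c * s) - mu = exp (c * s) * (la - mu * exp (-c * s)) := by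
      linear_combination mu * hexp
    rw [hfactor]; positivity
  have hFTC := integral_Ioi_of_hasDerivAt_of_nonneg'
    (fun t ht => hasDerivAt_expRatio_pow (hD t ht).ne' k)
    (fun t (ht : s < t) => by
      have hE : exp (-c * (t - s)) ≤ 1 := exp_le_one_iff.mpr (by nlinarith)
      have hDt := hD t ht.le
      exact mul_nonneg hK.le (div_nonneg (mul_nonneg (pow_nonneg (by linarith) _)
        (exp_pos _).le) (pow_pos hDt _).le))
    ((tendsto_expRatio_atTop (s := s) (mu := mu) hc hla.ne').pow (k + 1))
  rw [integral_const_mul, expRatio_self, zero_pow k.succ_ne_zero, sub_zero] at hFTC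
  have hpow : la⁻¹ ^ (k + 1) * la ^ (k + 1) = 1 := by
    rw [← mul_pow, inv_mul_cancel₀ hla.ne', one_pow]
  rw [eq_div_iff (by positivity)]
  set I := ∫ t in Set.Ioi s,
    (1 - exp (-c * (t - s))) ^ k * exp (-c * t) / (la - mu * exp (-c * t)) ^ (k + 2)
  linear_combination (exp (-c * s) * la ^ (k + 1)) * hFTC + exp (-c * s) * hpow -
    ((k + 1) * c * la * la ^ (k + 1) * I) * hexp

theorem stmt_7 (la mu : ℝ) (hmu : 0 ≤ mu) (hml : mu < la) (k : ℕ) (hk : 1 ≤ k)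
    (s : ℝ) (hs : 0 < s) :
    ∫ t in Set.Ioi s,
      (1 - exp (-(la - mu) * (t - s))) ^ (k - 1) * exp (-(la - mu) * t) /
        (la - mu * exp (-(la - mu) * t)) ^ (k + 1)
      = exp (-(la - mu) * s) /
          (k * (la - mu) * (la - mu * exp (-(la - mu) * s)) * la ^ k) := by
  obtain ⟨k, rfl⟩ := Nat.exists_eq_add_of_le' hk
  have hc : 0 < la - mu := sub_pos.mpr hml
  rw [Nat.add_sub_cancel]
  push_cast
  exact integral_Ioi_pow_mul_exp_div_pow hc (hmu.trans_lt hml)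
    (fun t ht => sub_mul_exp_neg_mul_pos hmu hml hc.le (hs.le.trans ht)) k
end

section
/- For all real rates λ, μ with 0 ≤ μ < λ and integers n ≥ 2, 1 ≤ k ≤ n−1, the integral over s from 0 to ∞ of (k+1)·C(n,k+1)·λ^{n−k}·(λ−μ)^{k+2}·e^{−(λ−μ)(k+1)s}·(1 − e^{−(λ−μ)s})^{n−k−1} / (λ − μ e^{−(λ−μ)s})^{n+1} equals 1. -/
open Real MeasureTheory Set Filter Topology Nat

/-!
The substitution `t = F(s)`, where `F(s) = λ(1 - e^{-(λ-μ)s}) / (λ - μ e^{-(λ-μ)s})` is the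
distribution function of a single speciation time, increases from `F(0) = 0` to `F(∞) = 1` and
turns the integrand into `(k+1) C(n,k+1) t^{n-k-1} (1-t)^k`, the density of the `(n-k)`-th
smallest of `n` independent uniform samples on `[0,1]`. Its integral is `1` by the Beta integral
`∫₀¹ t^a (1-t)^b dt = a! b! / (a+b+1)!`.
-/

theorem integral_pow_mul_one_sub_pow (a b : ℕ) :
    ∫ x in (0 : ℝ)..1, x ^ a * (1 - x) ^ b = (a ! * b ! / (a + b + 1)! : ℝ) := by
  have hβ := Complex.betaIntegral_eq_Gamma_mul_div (a + 1) (b + 1)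
    (by norm_cast; omega) (by norm_cast; omega)
  rw [show (a + 1 + (b + 1) : ℂ) = (a + b + 1 : ℕ) + 1 by push_cast; ring,
    Complex.Gamma_nat_eq_factorial, Complex.Gamma_nat_eq_factorial,
    Complex.Gamma_nat_eq_factorial, Complex.betaIntegral] at hβ
  simp only [add_sub_cancel_right, Complex.cpow_natCast] at hβ
  apply Complex.ofReal_injective
  rw [← intervalIntegral.integral_ofReal]
  push_cast
  exact hβ

theorem integral_Ioi_comp_mul_deriv_of_tendsto {f f' g : ℝ → ℝ} {a l : ℝ}
    (hf : ∀ x ∈ Ici a, HasDerivAt f (f' x) x) (hfl : Tendsto f atTop (𝓝 l))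
    (hg : Continuous g) (hnonneg : ∀ x ∈ Ioi a, 0 ≤ g (f x) * f' x) :
    ∫ x in Ioi a, g (f x) * f' x = ∫ u in f a..l, g u := by
  have hG (x : ℝ) (hx : x ∈ Ici a) :
      HasDerivAt (fun x ↦ ∫ u in f a..f x, g u) (g (f x) * f' x) x :=
    (hg.integral_hasStrictDerivAt (f a) (f x)).hasDerivAt.comp x (hf x hx)
  have hlim : Tendsto (fun x ↦ ∫ u in f a..f x, g u) atTop (𝓝 (∫ u in f a..l, g u)) :=
    ((intervalIntegral.continuous_primitive (fun _ _ ↦ hg.intervalIntegrable _ _) (f a)).tendsto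
      l).comp hfl
  simpa using integral_Ioi_of_hasDerivAt_of_nonneg' hG hnonneg hlim

noncomputable def orderStatisticDensity (n k : ℕ) (t : ℝ) : ℝ :=
  (k + 1) * n.choose (k + 1) * t ^ (n - k - 1) * (1 - t) ^ k

theorem orderStatisticDensity_nonneg {n k : ℕ} {t : ℝ} (h0 : 0 ≤ t) (h1 : t ≤ 1) :
    0 ≤ orderStatisticDensity n k t := by
  have : 0 ≤ 1 - t := by linarith
  unfold orderStatisticDensity
  positivity

theorem integral_orderStatisticDensity {n k : ℕ} (hk : k + 1 ≤ n) :
    ∫ t in (0 : ℝ)..1, orderStatisticDensity n k t = 1 := by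
  have hfac : ((n.choose (k + 1) * ((k + 1) * k !) * (n - k - 1)! : ℕ) : ℝ) = n ! := by
    rw [← Nat.factorial_succ, show n - k - 1 = n - (k + 1) by omega,
      Nat.choose_mul_factorial_mul_factorial hk]
  have hchoose : (n.choose (k + 1) : ℝ) ≠ 0 := by exact_mod_cast (Nat.choose_pos hk).ne'
  simp_rw [orderStatisticDensity, mul_assoc]
  rw [intervalIntegral.integral_const_mul, intervalIntegral.integral_const_mul,
    integral_pow_mul_one_sub_pow, show n - k - 1 + k + 1 = n by omega, ← hfac]
  push_cast
  field_simp

noncomputable def speciationCDF (la mu s : ℝ) : ℝ :=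
  la * (1 - exp (-(la - mu) * s)) / (la - mu * exp (-(la - mu) * s))

noncomputable def speciationPDF (la mu s : ℝ) : ℝ :=
  la * (la - mu) ^ 2 * exp (-(la - mu) * s) / (la - mu * exp (-(la - mu) * s)) ^ 2

section Speciation

variable {la mu s : ℝ}

theorem exp_neg_sub_mul_le_one (hml : mu < la) (hs : 0 ≤ s) : exp (-(la - mu) * s) ≤ 1 :=
  exp_le_one_iff.2 (mul_nonpos_of_nonpos_of_nonneg (by linarith) hs)

theorem sub_mul_exp_pos (hmu : 0 ≤ mu) (hml : mu < la) (hs : 0 ≤ s) :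
    0 < la - mu * exp (-(la - mu) * s) := by
  nlinarith [exp_neg_sub_mul_le_one hml hs]

@[simp]
theorem speciationCDF_zero : speciationCDF la mu 0 = 0 := by
  simp [speciationCDF]

theorem one_sub_speciationCDF (hD : la - mu * exp (-(la - mu) * s) ≠ 0) :
    1 - speciationCDF la mu s =
      (la - mu) * exp (-(la - mu) * s) / (la - mu * exp (-(la - mu) * s)) := by
  rw [speciationCDF, eq_div_iff hD, sub_mul, div_mul_cancel₀ _ hD]
  ring

theorem speciationCDF_nonneg (hmu : 0 ≤ mu) (hml : mu < la) (hs : 0 ≤ s) :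
    0 ≤ speciationCDF la mu s := by
  have := exp_neg_sub_mul_le_one hml hs
  have := sub_mul_exp_pos hmu hml hs
  have : 0 ≤ la := by linarith
  unfold speciationCDF
  positivity

theorem speciationCDF_le_one (hmu : 0 ≤ mu) (hml : mu < la) (hs : 0 ≤ s) :
    speciationCDF la mu s ≤ 1 := by
  have hD := sub_mul_exp_pos hmu hml hs
  have : 0 < la - mu := by linarith
  have : 0 ≤ 1 - speciationCDF la mu s := by
    rw [one_sub_speciationCDF hD.ne']
    positivity
  linarith

theorem speciationPDF_nonneg (hla : 0 ≤ la) : 0 ≤ speciationPDF la mu s := by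
  unfold speciationPDF
  positivity

theorem hasDerivAt_speciationCDF (hD : la - mu * exp (-(la - mu) * s) ≠ 0) :
    HasDerivAt (speciationCDF la mu) (speciationPDF la mu s) s := by
  have hexp :
      HasDerivAt (fun s ↦ exp (-(la - mu) * s)) (-(la - mu) * exp (-(la - mu) * s)) s := by
    simpa [mul_comm] using ((hasDerivAt_id s).const_mul (-(la - mu))).exp
  refine (((hexp.const_sub 1).const_mul la).div
    ((hexp.const_mul mu).const_sub la) hD).congr_deriv ?_
  rw [speciationPDF]
  ring

theorem tendsto_speciationCDF_atTop (hml : mu < la) (hla : la ≠ 0) :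
    Tendsto (speciationCDF la mu) atTop (𝓝 1) := by
  have hexp : Tendsto (fun s ↦ exp (-(la - mu) * s)) atTop (𝓝 0) :=
    tendsto_exp_atBot.comp (tendsto_id.const_mul_atTop_of_neg (by linarith))
  have := ((hexp.const_sub 1).const_mul la).div ((hexp.const_mul mu).const_sub la) (by simpa)
  simp only [mul_zero, sub_zero, mul_one, div_self hla] at this
  exact this

theorem orderStatisticDensity_speciationCDF_mul_speciationPDF {n k : ℕ} (hk : k + 1 ≤ n)
    (hD : la - mu * exp (-(la - mu) * s) ≠ 0) :
    orderStatisticDensity n k (speciationCDF la mu s) * speciationPDF la mu s =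
      (k + 1) * n.choose (k + 1) * la ^ (n - k) * (la - mu) ^ (k + 2) *
        exp (-(la - mu) * ((k + 1) * s)) * (1 - exp (-(la - mu) * s)) ^ (n - k - 1) /
        (la - mu * exp (-(la - mu) * s)) ^ (n + 1) := by
  obtain ⟨a, rfl⟩ := Nat.exists_eq_add_of_le hk
  have hexp : exp (-(la - mu) * ((k + 1) * s)) = exp (-(la - mu) * s) ^ (k + 1) := by
    rw [← exp_nat_mul]
    push_cast
    ring_nf
  rw [orderStatisticDensity, one_sub_speciationCDF hD, hexp, speciationCDF, speciationPDF,
    show k + 1 + a - k - 1 = a by omega, show k + 1 + a - k = a + 1 by omega]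
  simp only [div_pow, mul_pow]
  field_simp
  ring

end Speciation

theorem stmt_9_general (la mu : ℝ) (hmu : 0 ≤ mu) (hml : mu < la) (n k : ℕ)
    (hn : 2 ≤ n) (hk2 : k ≤ n - 1) :
    ∫ s in Set.Ioi (0:ℝ),
      (k + 1) * n.choose (k + 1) * la ^ (n - k) * (la - mu) ^ (k + 2) *
        exp (-(la - mu) * ((k + 1) * s)) * (1 - exp (-(la - mu) * s)) ^ (n - k - 1) /
        (la - mu * exp (-(la - mu) * s)) ^ (n + 1) = 1 := by
  have hla : 0 < la := hmu.trans_lt hml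
  have hk : k + 1 ≤ n := by omega
  have hD (s : ℝ) (hs : 0 ≤ s) := (sub_mul_exp_pos hmu hml hs).ne'
  calc _ = ∫ s in Ioi 0,
        orderStatisticDensity n k (speciationCDF la mu s) * speciationPDF la mu s :=
        setIntegral_congr_fun measurableSet_Ioi fun s hs ↦
          (orderStatisticDensity_speciationCDF_mul_speciationPDF hk (hD s (le_of_lt hs))).symm
    _ = ∫ t in (0 : ℝ)..1, orderStatisticDensity n k t := by
        rw [integral_Ioi_comp_mul_deriv_of_tendsto (fun s hs ↦ hasDerivAt_speciationCDF (hD s hs))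
          (tendsto_speciationCDF_atTop hml hla.ne') (by unfold orderStatisticDensity; fun_prop)
          fun s hs ↦ ?_, speciationCDF_zero]
        exact mul_nonneg (orderStatisticDensity_nonneg (speciationCDF_nonneg hmu hml (le_of_lt hs))
          (speciationCDF_le_one hmu hml (le_of_lt hs))) (speciationPDF_nonneg hla.le)
    _ = 1 := integral_orderStatisticDensity hk

theorem stmt_9 (la mu : ℝ) (hmu : 0 ≤ mu) (hml : mu < la) (n k : ℕ)
    (hn : 2 ≤ n) (hk1 : 1 ≤ k) (hk2 : k ≤ n - 1) :
    ∫ s in Set.Ioi (0:ℝ),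
      (k + 1) * n.choose (k + 1) * la ^ (n - k) * (la - mu) ^ (k + 2) *
        exp (-(la - mu) * ((k + 1) * s)) * (1 - exp (-(la - mu) * s)) ^ (n - k - 1) /
        (la - mu * exp (-(la - mu) * s)) ^ (n + 1) = 1 :=
  stmt_9_general la mu hmu hml n k hn hk2
end

section
/- Let λ > 0, let n ≥ 2 and 1 ≤ k ≤ n−1 be integers, and let t > 0. Then the integral over s from 0 to t of s · k·C(n−1,k)·λ·(e^{−λs} − e^{−λt})^{k−1}·e^{−λs}·(1 − e^{−λs})^{n−k−1} / (1 − e^{−λt})^{n−1} equals Σ_{i=0}^{n−k−1} Σ_{j=0}^{k−1} [ k C(n−1,k) C(n−k−1,i) C(k−1,j) (−1)^{i+j} / (λ (k+i−j)^2) ] · (1 − e^{−λt})^{1−n} · ( e^{−jλt} − ((k+i−j)λt + 1) e^{−(k+i)λt} ). -/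
open Real MeasureTheory Finset

/-!
Expanding `(e^{-λs} - e^{-λt})^{k-1}` and `(1 - e^{-λs})^{n-k-1}` by the binomial theorem turns the
integrand into a linear combination of the functions `s e^{-(k+i-j)λs}`, and
`∫₀ᵗ s e^{-cs} ds = (1 - (ct + 1) e^{-ct}) / c²` for each of them.
-/

theorem integral_mul_exp_neg_mul {c : ℝ} (hc : c ≠ 0) (t : ℝ) :
    ∫ s in (0:ℝ)..t, s * exp (-(c * s)) = (1 - (c * t + 1) * exp (-(c * t))) / c ^ 2 := by
  have hderiv : ∀ s ∈ Set.uIcc 0 t,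
      HasDerivAt (fun s => -((s / c + 1 / c ^ 2) * exp (-(c * s)))) (s * exp (-(c * s))) s := by
    intro s _
    have hlin : HasDerivAt (fun s => s / c + 1 / c ^ 2) (1 / c) s :=
      ((hasDerivAt_id' s).div_const c).add_const _
    have hexp : HasDerivAt (fun s => exp (-(c * s))) (exp (-(c * s)) * -c) s := by
      simpa using ((hasDerivAt_id' s).const_mul c).neg.exp
    refine (hlin.fun_mul hexp).fun_neg.congr_deriv ?_
    field_simp
    ring
  rw [intervalIntegral.integral_eq_sub_of_hasDerivAt hderiv
    ((by fun_prop : Continuous fun s => s * exp (-(c * s))).intervalIntegrable 0 t),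
    mul_zero, neg_zero, exp_zero]
  field_simp
  ring

theorem sub_pow_mul_mul_one_sub_pow_eq_sum {R : Type*} [CommRing R] (x y : R) {k m : ℕ}
    (hk : 1 ≤ k) (hm : 1 ≤ m) :
    (x - y) ^ (k - 1) * x * (1 - x) ^ (m - 1) =
      ∑ i ∈ range m, ∑ j ∈ range k,
        (-1) ^ (i + j) * (m - 1).choose i * (k - 1).choose j * y ^ j * x ^ (k + i - j) := by
  obtain ⟨k, rfl⟩ := Nat.exists_eq_add_of_le' hk
  obtain ⟨m, rfl⟩ := Nat.exists_eq_add_of_le' hm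
  rw [Nat.add_sub_cancel, Nat.add_sub_cancel, sub_eq_neg_add, sub_eq_neg_add, add_pow, add_pow,
    sum_mul, sum_mul]
  simp_rw [mul_sum]
  rw [sum_comm]
  refine sum_congr rfl fun i _ => sum_congr rfl fun j hj => ?_
  have hjk : j ≤ k := Nat.lt_succ_iff.mp (mem_range.mp hj)
  rw [show k + 1 + i - j = k - j + 1 + i by omega, neg_pow x, neg_pow y, one_pow]
  ring

theorem exp_sub_exp_pow_mul_exp_mul_one_sub_exp_pow_eq_sum (a s t : ℝ) {k m : ℕ}
    (hk : 1 ≤ k) (hm : 1 ≤ m) :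
    (exp (-a * s) - exp (-a * t)) ^ (k - 1) * exp (-a * s) * (1 - exp (-a * s)) ^ (m - 1) =
      ∑ i ∈ range m, ∑ j ∈ range k,
        (-1) ^ (i + j) * (m - 1).choose i * (k - 1).choose j *
          exp (-(j : ℝ) * a * t) * exp (-(((k : ℝ) + i - j) * a * s)) := by
  rw [sub_pow_mul_mul_one_sub_pow_eq_sum _ _ hk hm]
  refine sum_congr rfl fun i _ => sum_congr rfl fun j hj => ?_
  have hjk : j ≤ k + i := by have := mem_range.mp hj; omega
  rw [← exp_nat_mul, ← exp_nat_mul, Nat.cast_sub hjk]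
  push_cast
  ring_nf

theorem stmt_11_general (la : ℝ) (hla : 0 < la) (n k : ℕ) (hk1 : 1 ≤ k)
    (hk2 : k ≤ n - 1) (t : ℝ) :
    ∫ s in (0:ℝ)..t,
      s * (k * (n - 1).choose k * la * (exp (-la * s) - exp (-la * t)) ^ (k - 1) *
        exp (-la * s) * (1 - exp (-la * s)) ^ (n - k - 1) / (1 - exp (-la * t)) ^ (n - 1))
      = ∑ i ∈ Finset.range (n - k), ∑ j ∈ Finset.range k,
          (k * (n - 1).choose k * (n - k - 1).choose i * (k - 1).choose j *
              (-1 : ℝ) ^ (i + j) / (la * ((k : ℝ) + i - j) ^ 2)) *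
            (1 - exp (-la * t)) ^ (1 - (n : ℤ)) *
            (exp (-(j : ℝ) * la * t) -
              (((k : ℝ) + i - j) * la * t + 1) * exp (-((k : ℝ) + i) * la * t)) := by
  set Q := 1 - exp (-la * t)
  have hexpand : ∀ s : ℝ,
      s * (k * (n - 1).choose k * la * (exp (-la * s) - exp (-la * t)) ^ (k - 1) *
        exp (-la * s) * (1 - exp (-la * s)) ^ (n - k - 1) / Q ^ (n - 1)) =
      ∑ i ∈ range (n - k), ∑ j ∈ range k,
        k * (n - 1).choose k * (n - k - 1).choose i * (k - 1).choose j * (-1 : ℝ) ^ (i + j) *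
          la * exp (-(j : ℝ) * la * t) / Q ^ (n - 1) *
            (s * exp (-(((k : ℝ) + i - j) * la * s))) := by
    intro s
    rw [show ∀ A B : ℝ, s * (k * (n - 1).choose k * la * A * exp (-la * s) * B / Q ^ (n - 1))
        = k * (n - 1).choose k * la / Q ^ (n - 1) * s * (A * exp (-la * s) * B) by
          intro A B; ring,
      exp_sub_exp_pow_mul_exp_mul_one_sub_exp_pow_eq_sum _ _ _ hk1 (by omega : 1 ≤ n - k),
      mul_sum]
    simp_rw [mul_sum]
    exact sum_congr rfl fun i _ => sum_congr rfl fun j _ => by ring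
  rw [intervalIntegral.integral_congr fun s _ => hexpand s,
    intervalIntegral.integral_finsetSum fun i _ => (by fun_prop : Continuous _).intervalIntegrable 0 t]
  refine sum_congr rfl fun i _ => ?_
  rw [intervalIntegral.integral_finsetSum fun j _ => (by fun_prop : Continuous _).intervalIntegrable 0 t]
  refine sum_congr rfl fun j hj => ?_
  have hd : (0 : ℝ) < k + i - j := by
    have : (j : ℝ) < k := by exact_mod_cast mem_range.mp hj
    linarith [(i.cast_nonneg : (0 : ℝ) ≤ i)]
  have hzpow : Q ^ (1 - (n : ℤ)) = (Q ^ (n - 1))⁻¹ := by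
    rw [← zpow_natCast, ← zpow_neg, Nat.cast_sub (by omega : 1 ≤ n), neg_sub, Nat.cast_one]
  have hexp : exp (-((k : ℝ) + i) * la * t) =
      exp (-(j : ℝ) * la * t) * exp (-(((k : ℝ) + i - j) * la * t)) := by
    rw [← exp_add]; ring_nf
  rw [intervalIntegral.integral_const_mul, integral_mul_exp_neg_mul (by positivity), hzpow, hexp,
    div_eq_mul_inv _ (Q ^ (n - 1))]
  generalize (Q ^ (n - 1))⁻¹ = q
  field_simp

theorem stmt_11 (la : ℝ) (hla : 0 < la) (n k : ℕ) (hn : 2 ≤ n) (hk1 : 1 ≤ k)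
    (hk2 : k ≤ n - 1) (t : ℝ) (ht : 0 < t) :
    ∫ s in (0:ℝ)..t,
      s * (k * (n - 1).choose k * la * (exp (-la * s) - exp (-la * t)) ^ (k - 1) *
        exp (-la * s) * (1 - exp (-la * s)) ^ (n - k - 1) / (1 - exp (-la * t)) ^ (n - 1))
      = ∑ i ∈ Finset.range (n - k), ∑ j ∈ Finset.range k,
          (k * (n - 1).choose k * (n - k - 1).choose i * (k - 1).choose j *
              (-1 : ℝ) ^ (i + j) / (la * ((k : ℝ) + i - j) ^ 2)) *
            (1 - exp (-la * t)) ^ (1 - (n : ℤ)) *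
            (exp (-(j : ℝ) * la * t) -
              (((k : ℝ) + i - j) * la * t + 1) * exp (-((k : ℝ) + i) * la * t)) :=
  stmt_11_general la hla n k hk1 hk2 t
end

section
/- Let λ > 0, let n ≥ 2 and 1 ≤ k ≤ n−1 be integers, and let t > 0. Define f(s|t) := (1+λt)/(t(1+λs)^2) and F(s|t) := s(1+λt)/(t(1+λs)). Then the integral over s from 0 to t of s · k·C(n−1,k)·F(s|t)^{n−k−1}·(1−F(s|t))^{k−1}·f(s|t) equals t − Σ_{i=0}^{k−1} Σ_{j=0}^{i} C(n−1,i) C(i,j) ((−1)^{i+j}/λ^{n−j}) ((1+λt)/t)^{n−j−1} · [ λt − (n−j−1) ln(1+λt) + Σ_{l=2}^{n−j−1} C(n−j−1,l) (−1)^l ((1+λt)^{−l+1} − 1)/(1−l) ]. -/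
/-!
With `N = n - 1`, let `Q x = ∑_{i<k} C(N,i) (1-x)^i x^(N-i)`: `Q (F s)` is the probability that
fewer than `k` of the `N` i.i.d. speciation times exceed `s`, the distribution function of the
`k`-th speciation time, and the integrand is `s · (Q ∘ F)'(s)`. Integration by parts and
`F t = 1` turn the expectation into `t - ∫₀ᵗ Q (F s) ds`. Expanding `Q` binomially leaves the
integrals of `F ^ m`; since `F s` is a constant multiple of `λs / (1 + λs) = 1 - (1 + λs)⁻¹`, a
second binomial expansion makes these elementary.
-/

open Real MeasureTheory Finset

theorem sum_range_succ_eq_add_add_sum_Icc {M : Type*} [AddCommMonoid M] (f : ℕ → M) {m : ℕ}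
    (hm : 1 ≤ m) : ∑ l ∈ range (m + 1), f l = f 0 + f 1 + ∑ l ∈ Icc 2 m, f l := by
  rw [← Ico_add_one_right_eq_Icc, range_eq_Ico, ← sum_Ico_consecutive f (by omega : 0 ≤ 2)
    (by omega : 2 ≤ m + 1)]
  simp [sum_range_succ, add_assoc]

theorem one_sub_pow_eq_sum (x : ℝ) (m : ℕ) :
    (1 - x) ^ m = ∑ l ∈ range (m + 1), (m.choose l : ℝ) * (-1) ^ l * x ^ l := by
  rw [sub_eq_neg_add, add_pow]
  refine sum_congr rfl fun l _ => ?_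
  rw [neg_pow]
  ring

theorem sum_choose_mul_neg_one_pow_mul_pow (x : ℝ) {N i : ℕ} (hi : i ≤ N) :
    ∑ j ∈ range (i + 1), (i.choose j : ℝ) * (-1) ^ (i + j) * x ^ (N - j)
      = (1 - x) ^ i * x ^ (N - i) := by
  rw [sub_eq_add_neg, add_pow, sum_mul]
  refine sum_congr rfl fun j hj => ?_
  have hji : j ≤ i := mem_range_succ_iff.mp hj
  rw [neg_pow, show i + j = (i - j) + 2 * j by omega, show N - j = (i - j) + (N - i) by omega,
    pow_add, pow_mul, neg_one_sq, pow_add]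
  ring

theorem hasDerivAt_one_add_mul_zpow_div {c s : ℝ} {l : ℕ} (hl : (l : ℝ) ≠ 1)
    (hs : 1 + c * s ≠ 0) :
    HasDerivAt (fun s => (1 + c * s) ^ (1 - (l : ℤ)) / (1 - l)) (c * ((1 + c * s)⁻¹) ^ l) s := by
  have hlin : HasDerivAt (fun s : ℝ => 1 + c * s) c s := by
    simpa using ((hasDerivAt_id s).const_mul c).const_add 1
  have hzpow := ((hasDerivAt_zpow (1 - (l : ℤ)) _ (Or.inl hs)).comp s hlin).div_const (1 - l)
  refine hzpow.congr_deriv ?_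
  rw [show (1 - (l : ℤ) - 1) = -(l : ℤ) by ring, zpow_neg, zpow_natCast, ← inv_pow]
  have : (1 : ℝ) - l ≠ 0 := sub_ne_zero.mpr hl.symm
  push_cast
  field_simp

theorem hasDerivAt_primitive_mul_div_one_add_mul_pow {c s : ℝ} {m : ℕ} (hm : 1 ≤ m)
    (hs : 1 + c * s ≠ 0) :
    HasDerivAt (fun s => c * s - m * log (1 + c * s) +
      ∑ l ∈ Icc 2 m, (m.choose l : ℝ) * (-1) ^ l * ((1 + c * s) ^ (1 - (l : ℤ)) / (1 - l)))
      (c * (c * s / (1 + c * s)) ^ m) s := by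
  have hlin : HasDerivAt (fun s : ℝ => 1 + c * s) c s := by
    simpa using ((hasDerivAt_id s).const_mul c).const_add 1
  have hsum := HasDerivAt.fun_sum (u := Icc 2 m) fun l hl =>
    (hasDerivAt_one_add_mul_zpow_div (c := c) (s := s) (l := l)
      (by have := (mem_Icc.mp hl).1; norm_cast; omega) hs).const_mul
      ((m.choose l : ℝ) * (-1) ^ l)
  refine ((((hasDerivAt_id s).const_mul c).sub ((hlin.log hs).const_mul (m : ℝ))).add
    hsum).congr_deriv ?_
  rw [show c * s / (1 + c * s) = 1 - (1 + c * s)⁻¹ by field_simp; ring, one_sub_pow_eq_sum,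
    mul_sum, sum_range_succ_eq_add_add_sum_Icc _ hm]
  simp only [Nat.choose_zero_right, Nat.choose_one_right, pow_zero, pow_one]
  congr 1
  · field_simp
    ring
  · exact sum_congr rfl fun l _ => by ring

theorem one_add_mul_pos_of_mem_uIcc {c t s : ℝ} (hc : 0 ≤ c) (ht : 0 ≤ t)
    (hs : s ∈ Set.uIcc 0 t) : 0 < 1 + c * s := by
  rw [Set.uIcc_of_le ht] at hs
  have := hs.1
  positivity

theorem integral_mul_div_one_add_mul_pow {c t : ℝ} (hc : 0 ≤ c) (ht : 0 ≤ t) {m : ℕ}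
    (hm : 1 ≤ m) :
    c * ∫ s in (0 : ℝ)..t, (c * s / (1 + c * s)) ^ m =
      c * t - m * log (1 + c * t) +
        ∑ l ∈ Icc 2 m,
          (m.choose l : ℝ) * (-1) ^ l * (((1 + c * t) ^ (1 - (l : ℤ)) - 1) / (1 - l)) := by
  have hpos (s : ℝ) (hs : s ∈ Set.uIcc 0 t) := one_add_mul_pos_of_mem_uIcc hc ht hs
  have hcont : ContinuousOn (fun s => c * (c * s / (1 + c * s)) ^ m) (Set.uIcc 0 t) :=
    continuousOn_const.mul (((continuousOn_const.mul continuousOn_id).div (by fun_prop)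
      fun s hs => (hpos s hs).ne').pow m)
  rw [← intervalIntegral.integral_const_mul, intervalIntegral.integral_eq_sub_of_hasDerivAt
    (fun s hs => hasDerivAt_primitive_mul_div_one_add_mul_pow hm (hpos s hs).ne')
    hcont.intervalIntegrable]
  simp only [mul_zero, add_zero, log_one, one_zpow, sub_zero, sub_div, mul_sub, sum_sub_distrib]
  ring

noncomputable def binomTail (N k : ℕ) (x : ℝ) : ℝ :=
  ∑ i ∈ range k, (N.choose i : ℝ) * ((1 - x) ^ i * x ^ (N - i))

theorem binomTail_one {N k : ℕ} (hk : 1 ≤ k) : binomTail N k 1 = 1 := by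
  rw [binomTail, sum_eq_single_of_mem 0 (mem_range.mpr hk) fun i _ hi => by simp [zero_pow hi]]
  simp

theorem binomTail_eq_sum_sum (N k : ℕ) (x : ℝ) :
    binomTail N k x = ∑ i ∈ range k, ∑ j ∈ range (i + 1),
      (N.choose i : ℝ) * i.choose j * (-1) ^ (i + j) * x ^ (N - j) := by
  refine sum_congr rfl fun i _ => ?_
  rcases le_or_gt i N with hiN | hNi
  · simp_rw [mul_assoc, ← mul_sum, ← sum_choose_mul_neg_one_pow_mul_pow x hiN, mul_assoc]
  · simp [Nat.choose_eq_zero_of_lt hNi]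

theorem hasDerivAt_binomTail (N k : ℕ) (x : ℝ) :
    HasDerivAt (binomTail N k) (k * N.choose k * (1 - x) ^ (k - 1) * x ^ (N - k)) x := by
  set g : ℕ → ℝ := fun i => i * N.choose i * (1 - x) ^ (i - 1) * x ^ (N - i)
  -- the derivative telescopes, by `(i + 1) C(N, i + 1) = (N - i) C(N, i)`
  have hterm (i : ℕ) : HasDerivAt (fun x => (N.choose i : ℝ) * ((1 - x) ^ i * x ^ (N - i)))
      (g (i + 1) - g i) x := by
    refine ((((hasDerivAt_id x).const_sub 1).fun_pow i).mul
      ((hasDerivAt_id x).fun_pow (N - i))).const_mul _ |>.congr_deriv ?_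
    have hc : ((N.choose (i + 1) * (i + 1) : ℕ) : ℝ) = ((N.choose i * (N - i) : ℕ) : ℝ) := by
      rw [Nat.choose_succ_right_eq]
    push_cast at hc
    simp only [g, Nat.add_sub_cancel, Nat.sub_sub, id]
    push_cast
    linear_combination (-(1 - x) ^ i * x ^ (N - (i + 1))) * hc
  have hsum : HasDerivAt (binomTail N k) (∑ i ∈ range k, (g (i + 1) - g i)) x :=
    HasDerivAt.fun_sum fun i _ => hterm i
  rw [sum_range_sub g k] at hsum
  simpa [g] using hsum

theorem hasDerivAt_mul_div_mul_one_add_mul {c t s : ℝ} (ht : t ≠ 0) (hs : 1 + c * s ≠ 0) :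
    HasDerivAt (fun s => s * (1 + c * t) / (t * (1 + c * s))) ((1 + c * t) / (t * (1 + c * s) ^ 2))
      s := by
  refine (((hasDerivAt_id s).mul_const (1 + c * t)).div
    ((((hasDerivAt_id s).const_mul c).const_add 1).const_mul t) (by positivity)).congr_deriv ?_
  simp only [id]
  field_simp
  ring

theorem integral_mul_one_add_mul_div_pow {c t : ℝ} (hc : 0 < c) (ht : 0 < t) {m : ℕ}
    (hm : 1 ≤ m) :
    ∫ s in (0 : ℝ)..t, (s * (1 + c * t) / (t * (1 + c * s))) ^ m =
      ((1 + c * t) / t) ^ m / c ^ (m + 1) * (c * t - m * log (1 + c * t) +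
        ∑ l ∈ Icc 2 m,
          (m.choose l : ℝ) * (-1) ^ l * (((1 + c * t) ^ (1 - (l : ℤ)) - 1) / (1 - l))) := by
  have hrescale (s : ℝ) :
      s * (1 + c * t) / (t * (1 + c * s)) = (1 + c * t) / t / c * (c * s / (1 + c * s)) := by
    field_simp
  simp_rw [hrescale, mul_pow]
  rw [intervalIntegral.integral_const_mul, ← integral_mul_div_one_add_mul_pow hc.le ht.le hm,
    div_pow _ c, pow_succ]
  field_simp

theorem stmt_12_general (la : ℝ) (hla : 0 < la) (n k : ℕ) (hk1 : 1 ≤ k)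
    (hk2 : k ≤ n - 1) (t : ℝ) (ht : 0 < t) :
    ∫ s in (0:ℝ)..t,
      s * (k * (n - 1).choose k *
        ((s * (1 + la * t) / (t * (1 + la * s))) ^ (n - k - 1) *
          (1 - s * (1 + la * t) / (t * (1 + la * s))) ^ (k - 1) *
          ((1 + la * t) / (t * (1 + la * s) ^ 2))))
      = t - ∑ i ∈ Finset.range k, ∑ j ∈ Finset.range (i + 1),
          (n - 1).choose i * i.choose j * ((-1 : ℝ) ^ (i + j) / la ^ (n - j)) *
            ((1 + la * t) / t) ^ (n - j - 1) *
            (la * t - ((n : ℝ) - j - 1) * Real.log (1 + la * t) +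
              ∑ l ∈ Finset.Icc 2 (n - j - 1),
                (n - j - 1).choose l * (-1 : ℝ) ^ l *
                  (((1 + la * t) ^ (1 - (l : ℤ)) - 1) / (1 - (l : ℝ)))) := by
  set F : ℝ → ℝ := fun s => s * (1 + la * t) / (t * (1 + la * s))
  set f : ℝ → ℝ := fun s => (1 + la * t) / (t * (1 + la * s) ^ 2)
  have hpos (s : ℝ) (hs : s ∈ Set.uIcc 0 t) : 0 < 1 + la * s :=
    one_add_mul_pos_of_mem_uIcc hla.le ht.le hs
  have hF (s : ℝ) (hs : s ∈ Set.uIcc 0 t) : HasDerivAt F (f s) s :=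
    hasDerivAt_mul_div_mul_one_add_mul ht.ne' (hpos s hs).ne'
  have hFcont : ContinuousOn F (Set.uIcc 0 t) := fun s hs =>
    (hF s hs).continuousAt.continuousWithinAt
  have hfcont : ContinuousOn f (Set.uIcc 0 t) :=
    continuousOn_const.div (by fun_prop) fun s hs => by have := hpos s hs; positivity
  have hQF (s : ℝ) (hs : s ∈ Set.uIcc 0 t) : HasDerivAt (fun s => binomTail (n - 1) k (F s))
      (k * (n - 1).choose k * (F s ^ (n - k - 1) * (1 - F s) ^ (k - 1) * f s)) s :=
    ((hasDerivAt_binomTail _ _ _).comp s (hF s hs)).congr_deriv (by rw [Nat.sub_right_comm]; ring)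
  have hFt : F t = 1 := div_self (by have := hpos t Set.right_mem_uIcc; positivity)
  rw [intervalIntegral.integral_mul_deriv_eq_deriv_mul (fun s _ => hasDerivAt_id' s) hQF
    intervalIntegrable_const (ContinuousOn.intervalIntegrable (by fun_prop))]
  simp only [hFt, binomTail_one hk1, binomTail_eq_sum_sum, zero_mul, sub_zero, one_mul, mul_one]
  rw [intervalIntegral.integral_finsetSum fun i _ =>
    ContinuousOn.intervalIntegrable (by fun_prop)]
  congr 1
  refine sum_congr rfl fun i hi => ?_
  rw [intervalIntegral.integral_finsetSum fun j _ =>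
    ContinuousOn.intervalIntegrable (by fun_prop)]
  refine sum_congr rfl fun j hj => ?_
  have hjn : j + 1 < n := by
    have := mem_range.mp hi; have := mem_range.mp hj; omega
  rw [intervalIntegral.integral_const_mul, integral_mul_one_add_mul_div_pow hla ht (by omega),
    Nat.sub_right_comm, show n - j - 1 + 1 = n - j by omega]
  push_cast [Nat.sub_sub, Nat.cast_sub hjn.le]
  ring

theorem stmt_12 (la : ℝ) (hla : 0 < la) (n k : ℕ) (hn : 2 ≤ n) (hk1 : 1 ≤ k)
    (hk2 : k ≤ n - 1) (t : ℝ) (ht : 0 < t) :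
    ∫ s in (0:ℝ)..t,
      s * (k * (n - 1).choose k *
        ((s * (1 + la * t) / (t * (1 + la * s))) ^ (n - k - 1) *
          (1 - s * (1 + la * t) / (t * (1 + la * s))) ^ (k - 1) *
          ((1 + la * t) / (t * (1 + la * s) ^ 2))))
      = t - ∑ i ∈ Finset.range k, ∑ j ∈ Finset.range (i + 1),
          (n - 1).choose i * i.choose j * ((-1 : ℝ) ^ (i + j) / la ^ (n - j)) *
            ((1 + la * t) / t) ^ (n - j - 1) *
            (la * t - ((n : ℝ) - j - 1) * Real.log (1 + la * t) +
              ∑ l ∈ Finset.Icc 2 (n - j - 1),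
                (n - j - 1).choose l * (-1 : ℝ) ^ l *
                  (((1 + la * t) ^ (1 - (l : ℤ)) - 1) / (1 - (l : ℝ)))) :=
  stmt_12_general la hla n k hk1 hk2 t ht
end

section
/- Let 0 < μ < λ and set ρ := μ/λ. For integers n ≥ 2 and 1 ≤ k ≤ n−1, the integral over s from 0 to ∞ of s · (k+1)·C(n,k+1)·λ^{n−k}·(λ−μ)^{k+2}·e^{−(λ−μ)(k+1)s}·(1−e^{−(λ−μ)s})^{n−k−1}/(λ−μe^{−(λ−μ)s})^{n+1} equals ((k+1)/λ)·C(n,k+1)·(−1)^k · Σ_{i=0}^{n−k−1} C(n−k−1,i) · (1/((k+i+1)ρ)) · (1/ρ − 1)^{k+i} · [ ln(1/(1−ρ)) − Σ_{j=1}^{k+i} C(k+i,j) ((−1)^j/j) (1 − (1/(1−ρ))^j) ]. -/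
open Real MeasureTheory Set

/-!
Substituting `y = (1 - e^{-(λ-μ)s}) / (1 - ρ e^{-(λ-μ)s})`, the distribution function of a single
node time, turns the integrand into `(k+1) C(n,k+1) / (λ-μ) · log ((1-ρy)/(1-y)) (1-y)^k y^(n-k-1)`
on `(0,1)`. Writing `y = 1 - (1-y)` and expanding binomially leaves the integrals
`∫₀¹ log ((1-ρy)/(1-y)) (1-y)^p dy`. Integrating by parts against `-(1-y)^(p+1)/(p+1)` reduces
these to `∫ ρ^(p+1) (1-y)^p / (1-ρy) dy`, which is integrated term by term after expanding
`ρ(1-y) = (1-ρy) + (ρ-1)` binomially; the logarithmic singularity at `y = 1` is harmless because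
`u^(p+1) log u` is continuous at `0`.
-/

noncomputable def logBinomPrimitive (a : ℝ) (p : ℕ) (w : ℝ) : ℝ :=
  a ^ p * log w + ∑ j ∈ Finset.Icc 1 p, (p.choose j : ℝ) * a ^ (p - j) * w ^ j / j

theorem hasDerivAt_logBinomPrimitive (a : ℝ) (p : ℕ) {w : ℝ} (hw : w ≠ 0) :
    HasDerivAt (logBinomPrimitive a p) ((w + a) ^ p / w) w := by
  have hsum : HasDerivAt (fun w => ∑ j ∈ Finset.Icc 1 p, (p.choose j : ℝ) * a ^ (p - j) * w ^ j / j)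
      (∑ j ∈ Finset.Icc 1 p, (p.choose j : ℝ) * a ^ (p - j) * w ^ (j - 1)) w := by
    refine HasDerivAt.fun_sum fun j hj => ?_
    have hj : (j : ℝ) ≠ 0 := by have := (Finset.mem_Icc.mp hj).1; positivity
    refine (((hasDerivAt_pow j w).const_mul _).div_const (j : ℝ)).congr_deriv ?_
    field_simp
  refine (((hasDerivAt_log hw).const_mul (a ^ p)).add hsum).congr_deriv ?_
  rw [add_pow, Nat.range_succ_eq_Icc_zero, ← Finset.add_sum_Ioc_eq_sum_Icc (Nat.zero_le p),
    add_div, Finset.sum_div]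
  congr 1
  · simp [div_eq_mul_inv]
  · refine Finset.sum_congr rfl fun j hj => ?_
    obtain ⟨j, rfl⟩ := Nat.exists_eq_succ_of_ne_zero (Finset.mem_Ioc.mp hj).1.ne'
    rw [Nat.succ_sub_one, pow_succ]
    field_simp

theorem continuous_log_mul_pow {p : ℕ} (hp : p ≠ 0) : Continuous fun u : ℝ => log u * u ^ p := by
  obtain ⟨q, rfl⟩ := Nat.exists_eq_add_one_of_ne_zero hp
  refine (continuous_mul_log.fun_mul (continuous_pow q)).congr fun u => ?_
  ring

theorem one_sub_mul_pos {r y : ℝ} (hr : r < 1) (hy : y ∈ Icc (0 : ℝ) 1) : 0 < 1 - r * y := by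
  rcases le_or_gt 0 r with h | h <;> nlinarith [hy.1, hy.2]

theorem continuousOn_log_sub_log_mul_pow {r : ℝ} (hr : r < 1) {p : ℕ} (hp : p ≠ 0) :
    ContinuousOn (fun y => (log (1 - r * y) - log (1 - y)) * (1 - y) ^ p) (Icc 0 1) := by
  have hlog : ContinuousOn (fun y => log (1 - r * y)) (Icc 0 1) :=
    ContinuousOn.log (by fun_prop) fun y hy => (one_sub_mul_pos hr hy).ne'
  have hsing : Continuous fun y : ℝ => log (1 - y) * (1 - y) ^ p :=
    (continuous_log_mul_pow hp).comp (continuous_sub_left 1)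
  have hpow : Continuous fun y : ℝ => (1 - y) ^ p := by fun_prop
  refine ((hlog.fun_mul hpow.continuousOn).fun_sub hsing.continuousOn).congr fun y _ => ?_
  ring

noncomputable def logRatioPowPrimitive (r : ℝ) (p : ℕ) (y : ℝ) : ℝ :=
  -((log (1 - r * y) - log (1 - y)) * (1 - y) ^ (p + 1)) / (p + 1)
    - (1 - r) / ((p + 1) * r ^ (p + 1)) * logBinomPrimitive (r - 1) p (1 - r * y)

theorem hasDerivAt_logRatioPowPrimitive {r : ℝ} (hr : r ≠ 0) (p : ℕ) {y : ℝ} (hy : 1 - y ≠ 0)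
    (hry : 1 - r * y ≠ 0) :
    HasDerivAt (logRatioPowPrimitive r p) ((log (1 - r * y) - log (1 - y)) * (1 - y) ^ p) y := by
  have hlin : HasDerivAt (fun y => 1 - r * y) (-r) y := by
    simpa using ((hasDerivAt_id y).const_mul r).const_sub 1
  have hone : HasDerivAt (fun y : ℝ => 1 - y) (-1) y := by
    simpa using (hasDerivAt_id y).const_sub 1
  have hlogs := (hlin.log hry).fun_sub (hone.log hy)
  have hF := (hasDerivAt_logBinomPrimitive (r - 1) p hry).comp y hlin
  refine ((((hlogs.fun_mul (hone.fun_pow (p + 1))).fun_neg.div_const ((p : ℝ) + 1)).fun_sub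
    (hF.const_mul _))).congr_deriv ?_
  have hp : (p : ℝ) + 1 ≠ 0 := by positivity
  rw [show 1 - r * y + (r - 1) = r * (1 - y) by ring, mul_pow]
  field_simp
  push_cast
  ring

theorem continuousOn_logRatioPowPrimitive {r : ℝ} (hr : r < 1) (p : ℕ) :
    ContinuousOn (logRatioPowPrimitive r p) (Icc 0 1) := by
  have hF : ContinuousOn (fun y => logBinomPrimitive (r - 1) p (1 - r * y)) (Icc 0 1) :=
    fun y hy => ((hasDerivAt_logBinomPrimitive (r - 1) p (one_sub_mul_pos hr hy).ne').continuousAt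
      |>.comp (f := fun y => 1 - r * y) (by fun_prop)).continuousWithinAt
  exact ((continuousOn_log_sub_log_mul_pow hr p.succ_ne_zero).neg.div_const _).sub
    (continuousOn_const.mul hF)

theorem logBinomPrimitive_one_sub_logBinomPrimitive {r : ℝ} (hr : r ≠ 1) (p : ℕ) :
    logBinomPrimitive (r - 1) p 1 - logBinomPrimitive (r - 1) p (1 - r) =
      (r - 1) ^ p * (log (1 / (1 - r)) -
        ∑ j ∈ Finset.Icc 1 p, (p.choose j : ℝ) * ((-1) ^ j / j) * (1 - (1 / (1 - r)) ^ j)) := by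
  have h1r : 1 - r ≠ 0 := sub_ne_zero.mpr hr.symm
  have hterm : ∀ j ∈ Finset.Icc 1 p,
      (p.choose j : ℝ) * (r - 1) ^ (p - j) * 1 ^ j / j
        - (p.choose j : ℝ) * (r - 1) ^ (p - j) * (1 - r) ^ j / j
      = -((r - 1) ^ p * ((p.choose j : ℝ) * ((-1) ^ j / j) * (1 - (1 / (1 - r)) ^ j))) := by
    intro j hj
    have hj0 : (j : ℝ) ≠ 0 := by have := (Finset.mem_Icc.mp hj).1; positivity
    have hsign : (r - 1) ^ j * (-1) ^ j = (1 - r) ^ j := by rw [← mul_pow]; ring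
    rw [← pow_sub_mul_pow (r - 1) (Finset.mem_Icc.mp hj).2, one_div_pow]
    field_simp
    linear_combination (p.choose j : ℝ) * ((1 - r) ^ j - 1) * hsign
  rw [logBinomPrimitive, logBinomPrimitive, log_div one_ne_zero h1r, log_one, mul_sub,
    Finset.mul_sum, sub_eq_add_neg (_ * _), ← Finset.sum_neg_distrib, ← Finset.sum_congr rfl hterm,
    Finset.sum_sub_distrib]
  ring

theorem integral_log_sub_log_mul_one_sub_pow {r : ℝ} (hr0 : r ≠ 0) (hr1 : r < 1) {p : ℕ}
    (hp : p ≠ 0) :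
    ∫ y in (0 : ℝ)..1, (log (1 - r * y) - log (1 - y)) * (1 - y) ^ p
      = (1 - r) * (-1) ^ p * (1 / r - 1) ^ p / ((p + 1) * r) *
        (log (1 / (1 - r)) -
          ∑ j ∈ Finset.Icc 1 p, (p.choose j : ℝ) * ((-1) ^ j / j) * (1 - (1 / (1 - r)) ^ j)) := by
  rw [intervalIntegral.integral_eq_sub_of_hasDerivAt_of_le zero_le_one
    (continuousOn_logRatioPowPrimitive hr1 p)
    (fun y hy => hasDerivAt_logRatioPowPrimitive hr0 p (by linarith [hy.2])
      (one_sub_mul_pos hr1 (Ioo_subset_Icc_self hy)).ne')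
    ((continuousOn_log_sub_log_mul_pow hr1 hp).intervalIntegrable_of_Icc zero_le_one)]
  have hends : logRatioPowPrimitive r p 1 - logRatioPowPrimitive r p 0 =
      (1 - r) / ((p + 1) * r ^ (p + 1)) *
        (logBinomPrimitive (r - 1) p 1 - logBinomPrimitive (r - 1) p (1 - r)) := by
    simp only [logRatioPowPrimitive, mul_zero, mul_one, sub_zero, sub_self, log_one, one_pow,
      zero_pow p.succ_ne_zero]
    ring
  have h1r : 1 - r ≠ 0 := by linarith
  rw [hends, logBinomPrimitive_one_sub_logBinomPrimitive hr1.ne p,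
    show r - 1 = -1 * (1 - r) by ring, show 1 / r - 1 = (1 - r) / r by field_simp, mul_pow, div_pow]
  field_simp
  ring

-- The inverse of `s ↦ (1 - e^{-ds}) / (1 - r e^{-ds})`, which maps `(0, ∞)` onto `(0, 1)`.
noncomputable def nodeTimeQuantile (r d y : ℝ) : ℝ := (log (1 - r * y) - log (1 - y)) / d

section NodeTimeQuantile

variable {r d : ℝ}

theorem exp_neg_mul_nodeTimeQuantile (hr : r < 1) (hd : d ≠ 0) {y : ℝ} (hy : y ∈ Ioo 0 1) :
    exp (-d * nodeTimeQuantile r d y) = (1 - y) / (1 - r * y) := by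
  rw [nodeTimeQuantile, show -d * ((log (1 - r * y) - log (1 - y)) / d)
    = log (1 - y) - log (1 - r * y) by field_simp; ring, exp_sub, exp_log (by linarith [hy.2]),
    exp_log (one_sub_mul_pos hr (Ioo_subset_Icc_self hy))]

theorem hasDerivAt_nodeTimeQuantile {y : ℝ} (hy : 1 - y ≠ 0) (hry : 1 - r * y ≠ 0) :
    HasDerivAt (nodeTimeQuantile r d) ((1 - r) / (d * ((1 - r * y) * (1 - y)))) y := by
  have hlin : HasDerivAt (fun y => 1 - r * y) (-r) y := by
    simpa using ((hasDerivAt_id y).const_mul r).const_sub 1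
  have hone : HasDerivAt (fun y : ℝ => 1 - y) (-1) y := by
    simpa using (hasDerivAt_id y).const_sub 1
  refine (((hlin.log hry).fun_sub (hone.log hy)).div_const d).congr_deriv ?_
  field_simp
  ring

theorem injOn_nodeTimeQuantile (hr : r < 1) (hd : d ≠ 0) :
    InjOn (nodeTimeQuantile r d) (Ioo 0 1) := by
  intro y hy z hz hyz
  have h : exp (-d * nodeTimeQuantile r d y) = exp (-d * nodeTimeQuantile r d z) := by rw [hyz]
  rw [exp_neg_mul_nodeTimeQuantile hr hd hy, exp_neg_mul_nodeTimeQuantile hr hd hz,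
    div_eq_div_iff (one_sub_mul_pos hr (Ioo_subset_Icc_self hy)).ne'
      (one_sub_mul_pos hr (Ioo_subset_Icc_self hz)).ne'] at h
  have h' : (1 - r) * (y - z) = 0 := by linarith
  exact sub_eq_zero.mp ((mul_eq_zero.mp h').resolve_left (sub_pos.mpr hr).ne')

theorem image_nodeTimeQuantile (hr : r < 1) (hd : 0 < d) :
    nodeTimeQuantile r d '' Ioo 0 1 = Ioi 0 := by
  refine Subset.antisymm ?_ fun s hs => ?_
  · rintro _ ⟨y, hy, rfl⟩
    have hlt : 1 - y < 1 - r * y := by nlinarith [hy.1]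
    exact div_pos (sub_pos.mpr (log_lt_log (by linarith [hy.2]) hlt)) hd
  · set E := exp (-d * s) with hE
    have hE0 : 0 < E := exp_pos _
    have hE1 : E < 1 := exp_lt_one_iff.mpr (by nlinarith [mem_Ioi.mp hs])
    have hrE : 1 - E < 1 - r * E := by nlinarith
    have hy : (1 - E) / (1 - r * E) ∈ Ioo 0 1 :=
      ⟨div_pos (by linarith) (by linarith), (div_lt_one (by linarith)).mpr hrE⟩
    refine ⟨_, hy, ?_⟩
    have h := exp_neg_mul_nodeTimeQuantile hr hd.ne' hy
    have hq : (1 - (1 - E) / (1 - r * E)) / (1 - r * ((1 - E) / (1 - r * E))) = E := by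
      have h1 : 1 - r * E ≠ 0 := by linarith
      have h2 : 1 - r ≠ 0 := by linarith
      rw [one_sub_div h1, mul_div_assoc', one_sub_div h1, div_div_div_cancel_right₀ h1,
        show 1 - r * E - (1 - E) = (1 - r) * E by ring,
        show 1 - r * E - r * (1 - E) = 1 - r by ring, mul_div_cancel_left₀ E h2]
    rw [hq, hE, exp_eq_exp] at h
    exact mul_left_cancel₀ (neg_ne_zero.mpr hd.ne') h

theorem integral_Ioi_eq_integral_Ioo_nodeTimeQuantile (hr : r < 1) (hd : 0 < d) (G : ℝ → ℝ) :
    ∫ s in Ioi 0, G s =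
      ∫ y in Ioo 0 1, (1 - r) / (d * ((1 - r * y) * (1 - y))) * G (nodeTimeQuantile r d y) := by
  have hpos : ∀ y ∈ Ioo (0 : ℝ) 1, 0 < 1 - y ∧ 0 < 1 - r * y := fun y hy =>
    ⟨by linarith [hy.2], one_sub_mul_pos hr (Ioo_subset_Icc_self hy)⟩
  rw [← image_nodeTimeQuantile hr hd, integral_image_eq_integral_abs_deriv_smul measurableSet_Ioo
    (fun y hy => (hasDerivAt_nodeTimeQuantile (hpos y hy).1.ne' (hpos y hy).2.ne').hasDerivWithinAt)
    (injOn_nodeTimeQuantile hr hd.ne')]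
  refine setIntegral_congr_fun measurableSet_Ioo fun y hy => ?_
  obtain ⟨h1, h2⟩ := hpos y hy
  rw [smul_eq_mul, abs_of_pos (div_pos (by linarith) (by positivity))]

end NodeTimeQuantile

theorem jacobian_mul_density_eq {la mu c s y : ℝ} (hla : 0 < la) (hml : mu < la) (k m : ℕ)
    (hy : y ∈ Ioo 0 1) (hs : exp (-(la - mu) * s) = (1 - y) / (1 - mu / la * y)) :
    (1 - mu / la) / ((la - mu) * ((1 - mu / la * y) * (1 - y))) *
      (c * la ^ (m + 1) * (la - mu) ^ (k + 2) * exp (-(la - mu) * ((k + 1) * s)) *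
        (1 - exp (-(la - mu) * s)) ^ m / (la - mu * exp (-(la - mu) * s)) ^ (k + m + 2))
    = c * ((1 - y) ^ k * y ^ m) := by
  obtain ⟨r, rfl⟩ : ∃ r, mu = r * la := ⟨mu / la, by field_simp⟩
  have hr : r < 1 := by nlinarith
  rw [mul_div_cancel_right₀ r hla.ne'] at hs ⊢
  have hy1 : 0 < 1 - y := by linarith [hy.2]
  have hry : 0 < 1 - r * y := by nlinarith [hy.1, hy.2]
  have hpow : exp (-(la - r * la) * ((k + 1) * s)) = ((1 - y) / (1 - r * y)) ^ (k + 1) := by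
    rw [← hs, ← exp_nat_mul]
    push_cast
    ring_nf
  have h1 : 1 - (1 - y) / (1 - r * y) = (1 - r) * y / (1 - r * y) := by
    rw [one_sub_div hry.ne']
    ring
  have h2 : la - r * la * ((1 - y) / (1 - r * y)) = la * (1 - r) / (1 - r * y) := by
    rw [eq_div_iff hry.ne']
    field_simp
    ring
  have h3 : la - r * la = la * (1 - r) := by ring
  rw [hpow, hs, h1, h2, h3, div_pow, div_pow, div_pow, mul_pow, mul_pow, mul_pow]
  have : 1 - r ≠ 0 := by linarith
  field_simp
  ring

theorem integral_mul_density_eq {la mu : ℝ} (hla : 0 < la) (hml : mu < la) (c : ℝ) (k m : ℕ) :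
    ∫ s in Ioi 0, s * (c * la ^ (m + 1) * (la - mu) ^ (k + 2) * exp (-(la - mu) * ((k + 1) * s)) *
        (1 - exp (-(la - mu) * s)) ^ m / (la - mu * exp (-(la - mu) * s)) ^ (k + m + 2))
      = c / (la - mu) * ∫ y in (0 : ℝ)..1,
          (log (1 - mu / la * y) - log (1 - y)) * ((1 - y) ^ k * y ^ m) := by
  have hr : mu / la < 1 := (div_lt_one hla).mpr hml
  have hd : 0 < la - mu := sub_pos.mpr hml
  rw [integral_Ioi_eq_integral_Ioo_nodeTimeQuantile hr hd,
    intervalIntegral.integral_of_le zero_le_one, integral_Ioc_eq_integral_Ioo, ← integral_const_mul]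
  refine setIntegral_congr_fun measurableSet_Ioo fun y hy => ?_
  rw [mul_left_comm, jacobian_mul_density_eq hla hml k m hy
    (exp_neg_mul_nodeTimeQuantile hr hd.ne' hy), nodeTimeQuantile]
  ring

theorem integral_log_sub_log_mul_one_sub_pow_mul_pow {r : ℝ} (hr : r < 1) {k : ℕ} (hk : k ≠ 0)
    (m : ℕ) :
    ∫ y in (0 : ℝ)..1, (log (1 - r * y) - log (1 - y)) * ((1 - y) ^ k * y ^ m)
      = ∑ i ∈ Finset.range (m + 1), (m.choose i : ℝ) * (-1) ^ i *
          ∫ y in (0 : ℝ)..1, (log (1 - r * y) - log (1 - y)) * (1 - y) ^ (k + i) := by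
  have hexpand : ∀ y : ℝ, (log (1 - r * y) - log (1 - y)) * ((1 - y) ^ k * y ^ m)
      = ∑ i ∈ Finset.range (m + 1),
          (m.choose i : ℝ) * (-1) ^ i * ((log (1 - r * y) - log (1 - y)) * (1 - y) ^ (k + i)) := by
    intro y
    have hbinom : y ^ m = ∑ i ∈ Finset.range (m + 1), (m.choose i : ℝ) * (-1) ^ i * (1 - y) ^ i :=
      calc y ^ m = (-(1 - y) + 1) ^ m := by ring
        _ = _ := by
          rw [add_pow]
          refine Finset.sum_congr rfl fun i _ => ?_
          rw [neg_pow, one_pow]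
          ring
    rw [hbinom, Finset.mul_sum, Finset.mul_sum]
    refine Finset.sum_congr rfl fun i _ => ?_
    rw [pow_add]
    ring
  simp only [hexpand]
  rw [intervalIntegral.integral_finsetSum fun i _ =>
    ((continuousOn_log_sub_log_mul_pow hr (by omega)).intervalIntegrable_of_Icc
      zero_le_one).const_mul _]
  simp only [intervalIntegral.integral_const_mul]

theorem stmt_14_general (la mu : ℝ) (hmu : 0 < mu) (hml : mu < la) (n k : ℕ)
    (hk1 : 1 ≤ k) (hk2 : k ≤ n - 1) :
    ∫ s in Set.Ioi (0:ℝ),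
      s * ((k + 1) * n.choose (k + 1) * la ^ (n - k) * (la - mu) ^ (k + 2) *
        exp (-(la - mu) * ((k + 1) * s)) * (1 - exp (-(la - mu) * s)) ^ (n - k - 1) /
        (la - mu * exp (-(la - mu) * s)) ^ (n + 1))
      = ((k + 1 : ℝ) / la) * n.choose (k + 1) * (-1 : ℝ) ^ k *
          ∑ i ∈ Finset.range (n - k),
            (n - k - 1).choose i * (1 / (((k : ℝ) + i + 1) * (mu / la))) *
              (1 / (mu / la) - 1) ^ (k + i) *
              (Real.log (1 / (1 - mu / la)) -
                ∑ j ∈ Finset.Icc 1 (k + i),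
                  (k + i).choose j * ((-1 : ℝ) ^ j / j) *
                    (1 - (1 / (1 - mu / la)) ^ j)) := by
  have hla : 0 < la := hmu.trans hml
  have hr0 : mu / la ≠ 0 := (div_pos hmu hla).ne'
  have hr1 : mu / la < 1 := (div_lt_one hla).mpr hml
  obtain ⟨m, rfl⟩ : ∃ m, n = k + m + 1 := ⟨n - k - 1, by omega⟩
  rw [show k + m + 1 - k = m + 1 by omega, Nat.add_sub_cancel,
    show k + m + 1 + 1 = k + m + 2 by omega, integral_mul_density_eq hla hml,
    integral_log_sub_log_mul_one_sub_pow_mul_pow hr1 (by omega), Finset.mul_sum, Finset.mul_sum]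
  refine Finset.sum_congr rfl fun i _ => ?_
  rw [integral_log_sub_log_mul_one_sub_pow hr0 hr1 (by omega), pow_add (-1 : ℝ) k i]
  have hd : la - mu ≠ 0 := (sub_pos.mpr hml).ne'
  push_cast
  rcases neg_one_pow_eq_or ℝ i with h | h <;> rw [h] <;> field_simp

theorem stmt_14 (la mu : ℝ) (hmu : 0 < mu) (hml : mu < la) (n k : ℕ)
    (hn : 2 ≤ n) (hk1 : 1 ≤ k) (hk2 : k ≤ n - 1) :
    ∫ s in Set.Ioi (0:ℝ),
      s * ((k + 1) * n.choose (k + 1) * la ^ (n - k) * (la - mu) ^ (k + 2) *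
        exp (-(la - mu) * ((k + 1) * s)) * (1 - exp (-(la - mu) * s)) ^ (n - k - 1) /
        (la - mu * exp (-(la - mu) * s)) ^ (n + 1))
      = ((k + 1 : ℝ) / la) * n.choose (k + 1) * (-1 : ℝ) ^ k *
          ∑ i ∈ Finset.range (n - k),
            (n - k - 1).choose i * (1 / (((k : ℝ) + i + 1) * (mu / la))) *
              (1 / (mu / la) - 1) ^ (k + i) *
              (Real.log (1 / (1 - mu / la)) -
                ∑ j ∈ Finset.Icc 1 (k + i),
                  (k + i).choose j * ((-1 : ℝ) ^ j / j) *
                    (1 - (1 / (1 - mu / la)) ^ j)) :=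
  stmt_14_general la mu hmu hml n k hk1 hk2
end

section
/- Let λ > 0 and let n ≥ 2 and 1 ≤ k ≤ n−1 be integers. Then the integral over s from 0 to ∞ of s · (k+1)·C(n,k+1)·λ·(e^{λs} − 1)^{n−k−1}·e^{−λsn} equals Σ_{i=k+1}^{n} 1/(λ i). -/
/-!
Put `I(m, a) = ∫₀^∞ s (e^{rs} - 1)^m e^{-rs(m+a+1)} ds`. Splitting one factor
`e^{rs} - 1` off the power gives `I(m + 1, a) = I(m, a) - I(m, a + 1)`, and
`I(0, a) = 1 / (r (a + 1))²` is a Gamma integral. Induction on `m` then yields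
`I(m, a) = m! a! / ((m + a + 1)! r²) · ∑_{i = a+1}^{m+a+1} 1 / i`: the harmonic sums telescope
because `(m + a + 2) - (a + 1) = m + 1`. For `m = n - k - 1`, `a = k` the prefactor
`(k + 1) C(n, k + 1) r` of the density cancels `m! k! / (n! r²)` down to `1 / r`.
-/

open Real MeasureTheory Finset
open scoped Nat

theorem integral_mul_exp_neg_mul_Ioi {c : ℝ} (hc : 0 < c) :
    ∫ s in Set.Ioi (0 : ℝ), s * exp (-(c * s)) = (c ^ 2)⁻¹ := by
  have h := integral_rpow_mul_exp_neg_mul_Ioi two_pos hc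
  norm_num [Gamma_two] at h
  exact h

theorem integrableOn_mul_exp_neg_mul_Ioi {c : ℝ} (hc : 0 < c) :
    IntegrableOn (fun s => s * exp (-(c * s))) (Set.Ioi 0) :=
  Integrable.of_integral_ne_zero <| by
    rw [integral_mul_exp_neg_mul_Ioi hc]; positivity

noncomputable def momentIntegrand (r : ℝ) (m : ℕ) (c s : ℝ) : ℝ :=
  s * ((exp (r * s) - 1) ^ m * exp (-(r * s * c)))

theorem momentIntegrand_succ (r : ℝ) (m : ℕ) (c s : ℝ) :
    momentIntegrand r (m + 1) (c + 1) s =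
      momentIntegrand r m c s - momentIntegrand r m (c + 1) s := by
  have hexp : exp (r * s) * exp (-(r * s * (c + 1))) = exp (-(r * s * c)) := by
    rw [← exp_add]; ring_nf
  simp only [momentIntegrand, pow_succ, ← hexp]
  ring

theorem integrableOn_momentIntegrand {r : ℝ} (hr : 0 < r) {m : ℕ} {c : ℝ} (hc : m < c) :
    IntegrableOn (momentIntegrand r m c) (Set.Ioi 0) := by
  have hcont : Continuous (momentIntegrand r m c) := by unfold momentIntegrand; fun_prop
  refine (integrableOn_mul_exp_neg_mul_Ioi (mul_pos hr (sub_pos.2 hc))).mono'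
    hcont.aestronglyMeasurable ?_
  filter_upwards [ae_restrict_mem measurableSet_Ioi] with s (hs : 0 < s)
  have h1 : 1 ≤ exp (r * s) := one_le_exp (by positivity)
  calc ‖momentIntegrand r m c s‖
      = s * ((exp (r * s) - 1) ^ m * exp (-(r * s * c))) := by
        rw [momentIntegrand, Real.norm_of_nonneg (by bound)]
    _ ≤ s * (exp (r * s) ^ m * exp (-(r * s * c))) := by gcongr; linarith
    _ = s * exp (-(r * (c - m) * s)) := by
        rw [← exp_nat_mul, ← exp_add]; ring_nf

theorem integral_momentIntegrand_succ {r : ℝ} (hr : 0 < r) {m : ℕ} {c : ℝ} (hc : m < c) :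
    ∫ s in Set.Ioi (0 : ℝ), momentIntegrand r (m + 1) (c + 1) s =
      (∫ s in Set.Ioi (0 : ℝ), momentIntegrand r m c s) -
        ∫ s in Set.Ioi (0 : ℝ), momentIntegrand r m (c + 1) s := by
  simp_rw [momentIntegrand_succ]
  exact integral_sub (integrableOn_momentIntegrand hr hc)
    (integrableOn_momentIntegrand hr (by linarith))

theorem integral_momentIntegrand {r : ℝ} (hr : 0 < r) (m a : ℕ) :
    ∫ s in Set.Ioi (0 : ℝ), momentIntegrand r m (m + a + 1) s =
      m ! * a ! / ((m + a + 1) ! * r ^ 2) * ∑ i ∈ Icc (a + 1) (m + a + 1), (i : ℝ)⁻¹ := by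
  induction m generalizing a with
  | zero =>
    have hf : momentIntegrand r 0 ((0 : ℕ) + a + 1) = fun s => s * exp (-(r * (a + 1) * s)) := by
      ext s; simp only [momentIntegrand]; push_cast; ring_nf
    rw [hf, integral_mul_exp_neg_mul_Ioi (by positivity)]
    simp only [zero_add, Nat.factorial_zero, Icc_self, sum_singleton, Nat.factorial_succ]
    push_cast
    field_simp
  | succ m ih =>
    have hc : ((m + 1 : ℕ) : ℝ) + a + 1 = (m + a + 1 : ℝ) + 1 := by push_cast; ring
    have hc' : (m : ℝ) + (a + 1 : ℕ) + 1 = (m + a + 1 : ℝ) + 1 := by push_cast; ring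
    rw [hc, integral_momentIntegrand_succ hr (by linarith), ih, ← hc', ih]
    rw [show m + (a + 1) + 1 = m + a + 1 + 1 by omega,
      show m + 1 + a + 1 = m + a + 1 + 1 by omega]
    have htop := sum_Icc_succ_top (show a + 1 ≤ m + a + 1 + 1 by omega) fun i : ℕ => (i : ℝ)⁻¹
    have hbot := add_sum_Ioc_eq_sum_Icc (f := fun i : ℕ => (i : ℝ)⁻¹)
      (show a + 1 ≤ m + a + 1 + 1 by omega)
    rw [← Icc_add_one_left_eq_Ioc] at hbot
    rw [eq_sub_of_add_eq htop.symm, eq_sub_of_add_eq' hbot]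
    simp only [Nat.factorial_succ]
    push_cast
    field_simp
    ring

theorem stmt_15_general (la : ℝ) (hla : 0 < la) (n k : ℕ) (hk1 : 1 ≤ k)
    (hk2 : k ≤ n - 1) :
    ∫ s in Set.Ioi (0:ℝ),
      s * ((k + 1) * n.choose (k + 1) * la * (exp (la * s) - 1) ^ (n - k - 1) *
        exp (-(la * s * n)))
      = ∑ i ∈ Finset.Icc (k + 1) n, 1 / (la * i) := by
  obtain ⟨m, rfl⟩ : ∃ m, n = m + k + 1 := ⟨n - k - 1, by omega⟩
  have hchoose : ((m + k + 1).choose (k + 1) : ℝ) ≠ 0 :=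
    Nat.cast_ne_zero.2 (Nat.choose_pos (by omega)).ne'
  have hfact : ((m + k + 1).choose (k + 1) * m ! * (k + 1)! : ℝ) = (m + k + 1)! := by
    exact_mod_cast Nat.add_choose_mul_factorial_mul_factorial m (k + 1)
  have hintegrand : ∀ s, s * ((k + 1) * (m + k + 1).choose (k + 1) * la *
      (exp (la * s) - 1) ^ (m + k + 1 - k - 1) * exp (-(la * s * (m + k + 1 : ℕ)))) =
        (k + 1) * (m + k + 1).choose (k + 1) * la * momentIntegrand la m (m + k + 1) s := by
    intro s
    rw [momentIntegrand, show m + k + 1 - k - 1 = m by omega]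
    push_cast
    ring
  simp_rw [hintegrand, integral_const_mul, integral_momentIntegrand hla m k, one_div, mul_inv,
    ← mul_sum]
  rw [← hfact, Nat.factorial_succ]
  push_cast
  field_simp

theorem stmt_15 (la : ℝ) (hla : 0 < la) (n k : ℕ) (hn : 2 ≤ n) (hk1 : 1 ≤ k)
    (hk2 : k ≤ n - 1) :
    ∫ s in Set.Ioi (0:ℝ),
      s * ((k + 1) * n.choose (k + 1) * la * (exp (la * s) - 1) ^ (n - k - 1) *
        exp (-(la * s * n)))
      = ∑ i ∈ Finset.Icc (k + 1) n, 1 / (la * i) :=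
  stmt_15_general la hla n k hk1 hk2
end

section
/- Let λ > 0 and let n ≥ 2 and 1 ≤ k ≤ n−1 be integers. Then the integral over s from 0 to ∞ of s · (k+1)·C(n,k+1)·λ^{n−k}·s^{n−k−1}/(1+λs)^{n+1} equals (n−k)/(λk). -/
open Real MeasureTheory Set Filter Topology
open scoped Nat

/-!
The substitution `u = λ s` reduces the integral to the Beta-type integral
`I(m, q) = ∫₀^∞ u^m / (1 + u)^(m + q + 2) du = m! q! / (m + q + 1)!`
with `m = n - k`, `q = k - 1`.
Integrating the derivative of `u^(m+1) / (1 + u)^(m + q + 2)` over `(0, ∞)` gives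
`(m + q + 2) I(m + 1, q) = (m + 1) I(m, q)`, and `I(0, q) = 1 / (q + 1)`; the prefactor
`(k + 1) C(n, k + 1)` then cancels the factorials down to `(n - k) / k`.
-/

lemma pow_div_one_add_pow_le {u : ℝ} (hu : 0 ≤ u) {a b : ℕ} (hab : a ≤ b) :
    u ^ a / (1 + u) ^ b ≤ ((1 + u) ^ (b - a))⁻¹ := by
  obtain ⟨c, rfl⟩ := Nat.exists_eq_add_of_le hab
  calc u ^ a / (1 + u) ^ (a + c) ≤ (1 + u) ^ a / (1 + u) ^ (a + c) := by
        gcongr; linarith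
    _ = ((1 + u) ^ (a + c - a))⁻¹ := by rw [Nat.add_sub_cancel_left, pow_add]; field_simp

lemma tendsto_pow_div_one_add_pow_atTop {a b : ℕ} (hab : a < b) :
    Tendsto (fun u : ℝ => u ^ a / (1 + u) ^ b) atTop (𝓝 0) := by
  have hlim : Tendsto (fun u : ℝ => ((1 + u) ^ (b - a))⁻¹) atTop (𝓝 0) :=
    tendsto_inv_atTop_zero.comp ((tendsto_pow_atTop (by omega)).comp
      (tendsto_atTop_add_const_left _ 1 tendsto_id))
  refine tendsto_of_tendsto_of_tendsto_of_le_of_le' tendsto_const_nhds hlim ?_ ?_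
  · filter_upwards [eventually_ge_atTop 0] with u hu
    positivity
  · filter_upwards [eventually_ge_atTop 0] with u hu
    exact pow_div_one_add_pow_le hu hab.le

lemma integrableOn_pow_div_one_add_pow {a b : ℕ} (hab : a + 2 ≤ b) :
    IntegrableOn (fun u : ℝ => u ^ a / (1 + u) ^ b) (Ioi 0) := by
  have hdom : Integrable (fun u : ℝ => (1 + ‖u‖) ^ (-((b - a : ℕ) : ℝ))) :=
    integrable_one_add_norm (by simp; omega)
  refine hdom.integrableOn.mono' (by fun_prop : Measurable _).aestronglyMeasurable ?_
  filter_upwards [ae_restrict_mem measurableSet_Ioi] with u (hu : 0 < u)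
  rw [norm_of_nonneg (by positivity), norm_of_nonneg hu.le, rpow_neg (by positivity),
    rpow_natCast]
  exact pow_div_one_add_pow_le hu.le (by omega)

lemma hasDerivAt_pow_div_one_add_pow (a b : ℕ) {u : ℝ} (hu : 1 + u ≠ 0) :
    HasDerivAt (fun u : ℝ => u ^ a / (1 + u) ^ b)
      (a * (u ^ (a - 1) / (1 + u) ^ b) - b * (u ^ a / (1 + u) ^ (b + 1))) u := by
  have hden : HasDerivAt (fun u : ℝ => (1 + u) ^ b) (b * (1 + u) ^ (b - 1)) u := by
    simpa using ((hasDerivAt_id u).const_add 1).fun_pow b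
  refine ((hasDerivAt_pow a u).fun_div hden (pow_ne_zero b hu)).congr_deriv ?_
  rcases b with _ | b
  · simp
  · simp only [Nat.add_sub_cancel]
    field_simp
    ring

lemma mul_integral_pow_div_one_add_pow_succ {a b : ℕ} (hab : a < b)
    (hint₁ : IntegrableOn (fun u : ℝ => a * (u ^ (a - 1) / (1 + u) ^ b)) (Ioi 0))
    (hint₂ : IntegrableOn (fun u : ℝ => u ^ a / (1 + u) ^ (b + 1)) (Ioi 0)) :
    b * ∫ u in Ioi (0 : ℝ), u ^ a / (1 + u) ^ (b + 1)
      = 0 ^ a + a * ∫ u in Ioi (0 : ℝ), u ^ (a - 1) / (1 + u) ^ b := by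
  have h := integral_Ioi_of_hasDerivAt_of_tendsto'
    (fun u (hu : 0 ≤ u) => hasDerivAt_pow_div_one_add_pow a b (by linarith))
    (hint₁.sub (hint₂.const_mul _)) (tendsto_pow_div_one_add_pow_atTop hab)
  rw [integral_sub hint₁ (hint₂.const_mul _), integral_const_mul, integral_const_mul] at h
  simp only [add_zero, one_pow, div_one] at h
  linarith

lemma integral_inv_one_add_pow (q : ℕ) :
    ∫ u in Ioi (0 : ℝ), ((1 + u) ^ (q + 2))⁻¹ = ((q : ℝ) + 1)⁻¹ := by
  have h := mul_integral_pow_div_one_add_pow_succ (a := 0) (b := q + 1) (by omega)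
    (by simp) (integrableOn_pow_div_one_add_pow (by omega))
  simpa using eq_inv_of_mul_eq_one_right (by simpa using h)

lemma integral_succ_pow_div_one_add_pow (m q : ℕ) :
    (m + q + 2) * ∫ u in Ioi (0 : ℝ), u ^ (m + 1) / (1 + u) ^ (m + 1 + q + 2)
      = (m + 1) * ∫ u in Ioi (0 : ℝ), u ^ m / (1 + u) ^ (m + q + 2) := by
  have h := mul_integral_pow_div_one_add_pow_succ (a := m + 1) (b := m + q + 2) (by omega)
    ((integrableOn_pow_div_one_add_pow (by omega)).const_mul _)
    (integrableOn_pow_div_one_add_pow (by omega))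
  rw [show m + 1 + q + 2 = m + q + 2 + 1 by ring]
  simpa using h

lemma integral_pow_div_one_add_pow (m q : ℕ) :
    ∫ u in Ioi (0 : ℝ), u ^ m / (1 + u) ^ (m + q + 2) = m ! * q ! / (m + q + 1)! := by
  induction m with
  | zero =>
    simp [integral_inv_one_add_pow, Nat.factorial_succ]
    field_simp
  | succ m ih =>
    have h := integral_succ_pow_div_one_add_pow m q
    rw [ih] at h
    rw [show m + 1 + q + 1 = m + q + 1 + 1 by ring, Nat.factorial_succ (m + q + 1),
      Nat.factorial_succ m]
    push_cast
    field_simp at h ⊢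
    linear_combination h

lemma integral_pow_div_one_add_mul_pow {c : ℝ} (hc : 0 < c) (m q : ℕ) :
    ∫ s in Ioi (0 : ℝ), s ^ m / (1 + c * s) ^ (m + q + 2)
      = m ! * q ! / ((m + q + 1)! * c ^ (m + 1)) := by
  have hscale : ∀ s : ℝ, s ^ m / (1 + c * s) ^ (m + q + 2)
      = (c ^ m)⁻¹ * ((c * s) ^ m / (1 + c * s) ^ (m + q + 2)) := fun s => by
    rw [mul_pow]; field_simp
  simp_rw [hscale]
  rw [integral_const_mul,
    integral_comp_mul_left_Ioi (fun u => u ^ m / (1 + u) ^ (m + q + 2)) 0 hc, mul_zero,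
    integral_pow_div_one_add_pow, smul_eq_mul, pow_succ]
  field_simp

theorem stmt_16_general (la : ℝ) (hla : 0 < la) (n k : ℕ) (hk1 : 1 ≤ k)
    (hk2 : k ≤ n - 1) :
    ∫ s in Set.Ioi (0:ℝ),
      s * ((k + 1) * n.choose (k + 1) * la ^ (n - k) * s ^ (n - k - 1) /
        (1 + la * s) ^ (n + 1))
      = ((n : ℝ) - k) / (la * k) := by
  obtain ⟨q, rfl⟩ : ∃ q, k = q + 1 := ⟨k - 1, by omega⟩
  obtain ⟨m, rfl⟩ : ∃ m, n = m + q + 2 := ⟨n - q - 2, by omega⟩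
  rw [show m + q + 2 - (q + 1) = m + 1 by omega, Nat.add_sub_cancel,
    show m + q + 2 + 1 = m + 1 + q + 2 by ring]
  simp_rw [mul_div_assoc, mul_left_comm _ (_ * _ * _), ← mul_div_assoc _ (_ ^ m), ← pow_succ']
  rw [integral_const_mul, integral_pow_div_one_add_mul_pow hla]
  have hchoose : ((m + q + 2).choose (q + 2) : ℝ) * m ! * (q + 2)! = (m + q + 2)! := by
    exact_mod_cast Nat.add_choose_mul_factorial_mul_factorial m (q + 2)
  have hne : ((m + q + 2).choose (q + 2) : ℝ) ≠ 0 :=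
    Nat.cast_ne_zero.mpr (Nat.choose_pos (by omega)).ne'
  rw [show m + 1 + q + 1 = m + q + 2 by ring, ← hchoose, Nat.factorial_succ m,
    Nat.factorial_succ (q + 1), Nat.factorial_succ q]
  push_cast
  field_simp
  ring

theorem stmt_16 (la : ℝ) (hla : 0 < la) (n k : ℕ) (hn : 2 ≤ n) (hk1 : 1 ≤ k)
    (hk2 : k ≤ n - 1) :
    ∫ s in Set.Ioi (0:ℝ),
      s * ((k + 1) * n.choose (k + 1) * la ^ (n - k) * s ^ (n - k - 1) /
        (1 + la * s) ^ (n + 1))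
      = ((n : ℝ) - k) / (la * k) :=
  stmt_16_general la hla n k hk1 hk2
end
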